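/- arXiv:math/9907007 — 9 statements merged into one kernel-verified Lean document; each statement's English description precedes it below -/
import Mathlib

section
/- Let ñ : S → ℕ be a function on a finite set S satisfying: for every positive integer k dividing at least one value n_v, there exist cyclic subgroups C_i ⊆ Z/kZ and a bijection φ_k from { v ∈ S : k ∤ n_v } to the disjoint union of the sets C_i ∖ {0} with n_v ≡ φ_k(v) mod k for all such v. Suppose gcd of all n_v is 1, and let N = max_v n_v. Then φ(N) ≤ 2; in particular N ∈ {1,2,3,4,6}. -/
/-!
For a modulus `k` dividing some value, the Assumption makes the number of `v` with
`n v ≡ t (mod k)`, `t ≢ 0`, equal to the number of subgroups `Cᵢ` containing `t`; so this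
count can only grow when `t` is replaced by an element of `⟨t⟩`. All values lie in `[0, N]`,
so a residue `x < k` with `N < x + k` is taken only by the value `x` itself, and these
inequalities become statements about which numbers are values.

Comparing the moduli `N` and `N - x₀` rules out a value `x₀` with a partner `x₁ > x₀`,
`x₀ + x₁ < N`, `gcd(x₀, N) = gcd(x₁, N)`: modulo `N - x₀` the maximum `N` joins the class of
`x₀`, so that class is strictly more populated than the class of `x₁`, against the
inequality modulo `N`. If `p ^ a` exactly divides `N`, some value is prime to `p`, which
makes `N / p ^ a` a value; with the partner `m N / p ^ a` for a unit `2 ≤ m ≤ p ^ a - 2`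
this forces `p ^ a ≤ 4`. Hence `N ∣ 12`; for `N = 12` the same principles force the values
`9`, `8` (modulo `12`), `5` (modulo `9`) and `1`, and `(1, 5)` is a forbidden pair.
-/

/-- The Assumption of the paper: for every positive integer `k` dividing at least one
value `n v`, there exist cyclic subgroups `Cᵢ ⊆ ℤ/kℤ` and a bijection from
`{v : k ∤ n v}` to the disjoint union of the `Cᵢ ∖ {0}` under which `n v` is congruent
mod `k` to its image. -/
def SatisfiesAssumption {S : Type*} [Fintype S] (n : S → ℕ) : Prop :=
  ∀ k : ℕ, 0 < k → (∃ v, k ∣ n v) →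
    ∃ (ι : Type) (_ : Fintype ι) (C : ι → AddSubgroup (ZMod k))
      (e : {v : S // ¬ k ∣ n v} ≃ (i : ι) × {c : C i // c ≠ 0}),
      (∀ i, IsAddCyclic (C i)) ∧
      ∀ v : {v : S // ¬ k ∣ n v}, ((n v.1 : ZMod k)) = (((e v).2 : C (e v).1) : ZMod k)

open Finset

def AddSubgroup.fiberSigmaNeZeroEquiv {G ι : Type*} [AddGroup G] (C : ι → AddSubgroup G)
    {t : G} (ht : t ≠ 0) :
    {x : (i : ι) × {c : C i // c ≠ 0} // ((x.2 : C x.1) : G) = t} ≃ {i // t ∈ C i} where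
  toFun | ⟨⟨i, ⟨_, hc⟩, _⟩, h⟩ => ⟨i, h ▸ hc⟩
  invFun i := ⟨⟨i.1, ⟨t, i.2⟩, fun h => ht (congrArg Subtype.val h)⟩, rfl⟩
  left_inv := by rintro ⟨⟨i, ⟨c, hc⟩, hc0⟩, rfl⟩; rfl
  right_inv _ := rfl

theorem ZMod.natCast_mem_zmultiples_natCast {k x y : ℕ} (h : y.gcd k ∣ x) :
    (x : ZMod k) ∈ AddSubgroup.zmultiples (y : ZMod k) := by
  obtain ⟨t, rfl⟩ := h
  refine AddSubgroup.mem_zmultiples_iff.2 ⟨y.gcdA k * t, ?_⟩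
  have hbezout := congrArg (Int.cast : ℤ → ZMod k) (Nat.gcd_eq_gcd_ab y k)
  rw [zsmul_eq_mul]
  push_cast [ZMod.natCast_self] at hbezout ⊢
  rw [hbezout]
  ring

theorem Finset.exists_not_dvd_of_gcd_eq_one {ι : Type*} {s : Finset ι} {f : ι → ℕ}
    (h : s.gcd f = 1) {p : ℕ} (hp : p ≠ 1) : ∃ i ∈ s, ¬ p ∣ f i := by
  by_contra! hdvd
  exact hp (Nat.dvd_one.1 (h ▸ Finset.dvd_gcd hdvd))

theorem Nat.exists_coprime_of_five_le_prime_pow {p a : ℕ} (hp : p.Prime) (h : 5 ≤ p ^ a) :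
    ∃ m, 2 ≤ m ∧ m + 2 ≤ p ^ a ∧ m.Coprime (p ^ a) := by
  rcases hp.eq_two_or_odd' with rfl | hodd
  · refine ⟨3, by norm_num, ?_, Nat.Coprime.pow_right a (by norm_num)⟩
    have ha : 3 ≤ a := by
      by_contra! ha
      interval_cases a <;> simp at h
    calc 3 + 2 ≤ 2 ^ 3 := by norm_num
      _ ≤ 2 ^ a := Nat.pow_le_pow_right two_pos ha
  · exact ⟨2, le_rfl, by omega, (Nat.coprime_two_left.2 hodd).pow_right a⟩

section

variable {S : Type*} [Fintype S] {n : S → ℕ}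

theorem card_natCast_eq_eq_card_eq {k x : ℕ} (hxk : x < k) (hn : ∀ v, n v < x + k) :
    #{v | (n v : ZMod k) = x} = #{v | n v = x} := by
  congr 1
  ext v
  simp only [mem_filter, mem_univ, true_and, ZMod.natCast_eq_natCast_iff', Nat.mod_eq_of_lt hxk]
  refine ⟨fun h => ?_, fun h => by rw [h, Nat.mod_eq_of_lt hxk]⟩
  have hq : n v / k = 0 := by
    by_contra hq
    nlinarith [Nat.div_add_mod (n v) k, hn v, Nat.one_le_iff_ne_zero.2 hq]
  rw [← Nat.div_add_mod (n v) k, hq, h, mul_zero, zero_add]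

theorem card_eq_add_card_eq_le {k x y : ℕ} (hxy : x ≠ y) (hyx : (y : ZMod k) = x) :
    #{v | n v = x} + #{v | n v = y} ≤ #{v | (n v : ZMod k) = x} := by
  classical
  rw [← card_union_of_disjoint (disjoint_filter.2 fun v _ hx hy => hxy (hx.symm.trans hy)),
    ← filter_or]
  refine card_le_card fun v => ?_
  simp only [mem_filter, mem_univ, true_and]
  rintro (h | h) <;> rw [h]
  exact hyx

namespace SatisfiesAssumption

theorem exists_card_eq (hass : SatisfiesAssumption n) {k : ℕ} (hk : 0 < k)
    (hkn : ∃ v, k ∣ n v) :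
    ∃ (ι : Type) (_ : Finite ι) (C : ι → AddSubgroup (ZMod k)),
      ∀ t : ZMod k, t ≠ 0 → #{v | (n v : ZMod k) = t} = Nat.card {i // t ∈ C i} := by
  obtain ⟨ι, _, C, e, -, he⟩ := hass k hk hkn
  refine ⟨ι, inferInstance, C, fun t ht => ?_⟩
  rw [← Fintype.card_subtype, ← Nat.card_eq_fintype_card]
  refine Nat.card_congr <| (Equiv.subtypeSubtypeEquivSubtype fun hv => ?_).symm.trans <|
    (e.subtypeEquiv fun w => by rw [he w]).trans (AddSubgroup.fiberSigmaNeZeroEquiv C ht)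
  rwa [← ZMod.natCast_eq_zero_iff, hv]

theorem card_le_of_gcd_dvd (hass : SatisfiesAssumption n) {k r s : ℕ} (hk : 0 < k)
    (hkn : ∃ v, k ∣ n v) (hr : ¬ k ∣ r) (hs : ¬ k ∣ s) (hrs : r.gcd k ∣ s) :
    #{v | (n v : ZMod k) = r} ≤ #{v | (n v : ZMod k) = s} := by
  obtain ⟨ι, _, C, hC⟩ := hass.exists_card_eq hk hkn
  rw [hC r (mt (ZMod.natCast_eq_zero_iff r k).1 hr),
    hC s (mt (ZMod.natCast_eq_zero_iff s k).1 hs)]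
  obtain ⟨m, hm⟩ := AddSubgroup.mem_zmultiples_iff.1 (ZMod.natCast_mem_zmultiples_natCast hrs)
  exact Nat.card_le_card_of_injective _
    (Subtype.impEmbedding _ _ fun i hi => hm ▸ zsmul_mem hi m).injective

theorem exists_eq_of_gcd_dvd (hass : SatisfiesAssumption n) {k x : ℕ} {w : S}
    (hkn : ∃ v, k ∣ n v) (hw : ¬ k ∣ n w) (hx : 0 < x) (hxk : x < k) (hn : ∀ v, n v < x + k)
    (hwx : (n w).gcd k ∣ x) : ∃ v, n v = x := by
  have hle := hass.card_le_of_gcd_dvd (hx.trans hxk) hkn hw (Nat.not_dvd_of_pos_of_lt hx hxk) hwx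
  rw [card_natCast_eq_eq_card_eq hxk hn] at hle
  obtain ⟨v, hv⟩ := card_pos.1 ((card_pos.2 ⟨w, by simp⟩).trans_le hle)
  exact ⟨v, (mem_filter.1 hv).2⟩

theorem gcd_ne_gcd_of_add_lt (hass : SatisfiesAssumption n) {N x₀ x₁ : ℕ}
    (hle : ∀ v, n v ≤ N) (hN : ∃ v, n v = N) (hx₀ : ∃ v, n v = x₀) (h0 : 0 < x₀)
    (h01 : x₀ < x₁) (h1N : x₀ + x₁ < N) : x₀.gcd N ≠ x₁.gcd N := by
  intro hg
  obtain ⟨u, hu⟩ := hN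
  obtain ⟨w, hw⟩ := hx₀
  have hNn : ∃ v, N ∣ n v := ⟨u, hu ▸ dvd_rfl⟩
  obtain ⟨u', hu'⟩ : ∃ v, n v = N - x₀ :=
    hass.exists_eq_of_gcd_dvd hNn (hw ▸ Nat.not_dvd_of_pos_of_lt h0 (by omega)) (by omega)
      (by omega) (fun v => by have := hle v; omega)
      (hw ▸ Nat.dvd_sub (Nat.gcd_dvd_right _ _) (Nat.gcd_dvd_left _ _))
  have hNk : ((N : ℕ) : ZMod (N - x₀)) = x₀ :=
    ((ZMod.natCast_eq_natCast_iff _ _ _).2 ((Nat.modEq_iff_dvd' (by omega)).2 dvd_rfl)).symm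
  have hcount := calc
    #{v | n v = x₀} + #{v | n v = N} ≤ #{v | (n v : ZMod (N - x₀)) = x₀} :=
      card_eq_add_card_eq_le (by omega) hNk
    _ ≤ #{v | (n v : ZMod (N - x₀)) = x₁} :=
      hass.card_le_of_gcd_dvd (by omega) ⟨u', hu' ▸ dvd_rfl⟩
        (Nat.not_dvd_of_pos_of_lt h0 (by omega)) (Nat.not_dvd_of_pos_of_lt (by omega) (by omega))
        (by rw [Nat.gcd_sub_self_right (by omega), hg]; exact Nat.gcd_dvd_left _ _)
    _ = #{v | n v = x₁} := card_natCast_eq_eq_card_eq (by omega) fun v => by have := hle v; omega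
    _ = #{v | (n v : ZMod N) = x₁} :=
      (card_natCast_eq_eq_card_eq (by omega) fun v => by have := hle v; omega).symm
    _ ≤ #{v | (n v : ZMod N) = x₀} :=
      hass.card_le_of_gcd_dvd (by omega) hNn (Nat.not_dvd_of_pos_of_lt (by omega) (by omega))
        (Nat.not_dvd_of_pos_of_lt h0 (by omega)) (hg ▸ Nat.gcd_dvd_left _ _)
    _ = #{v | n v = x₀} := card_natCast_eq_eq_card_eq (by omega) fun v => by have := hle v; omega
  have hNpos : 0 < #{v | n v = N} := card_pos.2 ⟨u, by simp [hu]⟩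
  omega

theorem exists_eq_of_dvd_pow_mul (hass : SatisfiesAssumption n) {N p a x : ℕ}
    (hle : ∀ v, n v ≤ N) (hN : ∃ v, n v = N) (hgcd : univ.gcd n = 1) (hp : p.Prime)
    (hpN : p ∣ N) (hx : 0 < x) (hxN : x < N) (hNx : N ∣ p ^ a * x) : ∃ v, n v = x := by
  obtain ⟨w, -, hw⟩ := exists_not_dvd_of_gcd_eq_one hgcd hp.ne_one
  obtain ⟨u, hu⟩ := hN
  refine hass.exists_eq_of_gcd_dvd ⟨u, hu ▸ dvd_rfl⟩ (fun h => hw (hpN.trans h)) hx hxN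
    (fun v => by have := hle v; omega) ?_
  have hcop : (p ^ a).Coprime ((n w).gcd N) :=
    ((hp.coprime_iff_not_dvd.2 hw).coprime_dvd_right (Nat.gcd_dvd_left _ _)).pow_left a
  exact hcop.symm.dvd_of_dvd_mul_left ((Nat.gcd_dvd_right _ _).trans hNx)

theorem pow_le_four_of_pow_dvd (hass : SatisfiesAssumption n) {N p k : ℕ}
    (hle : ∀ v, n v ≤ N) (hN : ∃ v, n v = N) (hgcd : univ.gcd n = 1) (hN0 : N ≠ 0)
    (hp : p.Prime) (hpk : p ^ k ∣ N) : p ^ k ≤ 4 := by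
  by_contra! h5
  have hk : k ≠ 0 := by rintro rfl; simp at h5
  set P := p ^ N.factorization p
  set B := N / P
  have hPB : P * B = N := Nat.ordProj_mul_ordCompl_eq_self N p
  have hB : 0 < B := Nat.ordCompl_pos p hN0
  have hP : 5 ≤ P :=
    h5.trans_le (Nat.pow_le_pow_right hp.pos ((hp.pow_dvd_iff_le_factorization hN0).1 hpk))
  obtain ⟨m, hm2, hmP, hmP'⟩ : ∃ m, 2 ≤ m ∧ m + 2 ≤ P ∧ m.Coprime P :=
    Nat.exists_coprime_of_five_le_prime_pow hp hP
  have hBval := hass.exists_eq_of_dvd_pow_mul hle hN hgcd hp ((dvd_pow_self p hk).trans hpk) hB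
    (by nlinarith) (by rw [hPB])
  refine hass.gcd_ne_gcd_of_add_lt hle hN hBval hB (x₁ := m * B) (by nlinarith) (by nlinarith) ?_
  rw [← hPB, Nat.gcd_eq_left (dvd_mul_left B P), Nat.gcd_mul_right, hmP'.gcd_eq_one, one_mul]

theorem dvd_twelve (hass : SatisfiesAssumption n) {N : ℕ} (hle : ∀ v, n v ≤ N)
    (hN : ∃ v, n v = N) (hgcd : univ.gcd n = 1) (hN0 : N ≠ 0) : N ∣ 12 :=
  (Nat.dvd_iff_prime_pow_dvd_dvd 12 N).2 fun p k hp hpk => by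
    have h4 := hass.pow_le_four_of_pow_dvd hle hN hgcd hN0 hp hpk
    have h0 := pow_pos hp.pos k
    generalize p ^ k = q at h4 h0 ⊢
    interval_cases q <;> norm_num

theorem ne_twelve (hass : SatisfiesAssumption n) {N : ℕ} (hle : ∀ v, n v ≤ N)
    (hN : ∃ v, n v = N) (hgcd : univ.gcd n = 1) : N ≠ 12 := by
  rintro rfl
  have h12 : ∃ v, 12 ∣ n v := hN.imp fun v (hv : n v = 12) => hv ▸ dvd_rfl
  obtain ⟨v₉, h₉⟩ := hass.exists_eq_of_dvd_pow_mul hle hN hgcd (a := 2) (x := 9) Nat.prime_two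
    (by norm_num) (by norm_num) (by norm_num) (by norm_num)
  obtain ⟨v₈, h₈⟩ := hass.exists_eq_of_dvd_pow_mul hle hN hgcd (a := 1) (x := 8) Nat.prime_three
    (by norm_num) (by norm_num) (by norm_num) (by norm_num)
  obtain ⟨v₅, h₅⟩ := hass.exists_eq_of_gcd_dvd (k := 9) (w := v₈) (x := 5) ⟨v₉, h₉ ▸ dvd_rfl⟩
    (by rw [h₈]; norm_num) (by norm_num) (by norm_num) (fun v => (hle v).trans_lt (by norm_num))
    (by rw [h₈]; norm_num)
  obtain ⟨v₁, h₁⟩ := hass.exists_eq_of_gcd_dvd (k := 12) (w := v₅) (x := 1) h12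
    (by rw [h₅]; norm_num) (by norm_num) (by norm_num) (fun v => (hle v).trans_lt (by norm_num))
    (by rw [h₅]; norm_num)
  exact hass.gcd_ne_gcd_of_add_lt hle hN ⟨v₁, h₁⟩ (x₁ := 5) (by norm_num) (by norm_num)
    (by norm_num) (by norm_num)

end SatisfiesAssumption

end

theorem totient_max_le_two_general {S : Type*} [Fintype S] (n : S → ℕ)
    (hass : SatisfiesAssumption n)
    (hgcd : Finset.univ.gcd n = 1) (N : ℕ) (hN : N = Finset.univ.sup n) :
    Nat.totient N ≤ 2 ∧ N ∈ ({1, 2, 3, 4, 6} : Set ℕ) := by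
  obtain ⟨w, -, hw⟩ := exists_not_dvd_of_gcd_eq_one hgcd (p := 2) (by norm_num)
  have hle : ∀ v, n v ≤ N := fun v => hN ▸ le_sup (mem_univ v)
  obtain ⟨u, -, hu⟩ := exists_mem_eq_sup univ ⟨w, mem_univ w⟩ n
  have hmax : ∃ v, n v = N := ⟨u, hN ▸ hu.symm⟩
  have hN0 : N ≠ 0 := fun h => hw (Nat.le_zero.1 (h ▸ hle w) ▸ dvd_zero 2)
  have h12 := hass.dvd_twelve hle hmax hgcd hN0
  have hne := hass.ne_twelve hle hmax hgcd
  have hmem : N ∈ ({1, 2, 3, 4, 6} : Set ℕ) := by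
    have := Nat.le_of_dvd (by norm_num) h12
    simp only [Set.mem_insert_iff, Set.mem_singleton_iff]
    interval_cases N <;> omega
  refine ⟨?_, hmem⟩
  rcases hmem with rfl | rfl | rfl | rfl | rfl <;> decide

/-- Under the Assumption, if the values `n v` are positive with gcd `1` and maximum `N`,
then `φ(N) ≤ 2`; in particular `N ∈ {1, 2, 3, 4, 6}`. -/
theorem totient_max_le_two {S : Type*} [Fintype S] [Nonempty S] (n : S → ℕ)
    (hpos : ∀ v, 0 < n v) (hass : SatisfiesAssumption n)
    (hgcd : Finset.univ.gcd n = 1) (N : ℕ) (hN : N = Finset.univ.sup n) :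
    Nat.totient N ≤ 2 ∧ N ∈ ({1, 2, 3, 4, 6} : Set ℕ) :=
  totient_max_le_two_general n hass hgcd N hN
end

section
/- Under the same Assumption on (S, ñ) with gcd of the n_v equal to 1 and N = max n_v: the set of values taken by ñ is exactly the full interval {1, 2, …, N} of positive integers. -/
/-- Bezout: the gcd of `a` and `k`, viewed in `ZMod k`, is an integer multiple of `a`. -/
lemma gcd_mem_zmultiples (a k : ℕ) :
    ((Nat.gcd a k : ℕ) : ZMod k) ∈ AddSubgroup.zmultiples ((a : ℕ) : ZMod k) := by
  rw [AddSubgroup.mem_zmultiples_iff]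
  refine ⟨Nat.gcdA a k, ?_⟩
  have h := Nat.gcd_eq_gcd_ab a k
  have h2 : ((Nat.gcd a k : ℤ) : ZMod k) = ((a * Nat.gcdA a k + k * Nat.gcdB a k : ℤ) : ZMod k) := by
    rw [← h]
  calc (Nat.gcdA a k) • ((a : ℕ) : ZMod k)
      = ((a * Nat.gcdA a k + k * Nat.gcdB a k : ℤ) : ZMod k) := by
        push_cast [zsmul_eq_mul]
        rw [ZMod.natCast_self]
        ring
    _ = ((Nat.gcd a k : ℕ) : ZMod k) := by rw [← h2]; push_cast; rfl

/-- Workhorse: if `y ≠ 0` lies in the cyclic subgroup of `ZMod k` generated by the residue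
of some value `n v` (with `k ∤ n v`), then `y` is the residue of some value. -/
lemma exists_value {S : Type*} [Fintype S] (n : S → ℕ) (hass : SatisfiesAssumption n)
    (k : ℕ) (hk : 0 < k) (hdvd : ∃ v, k ∣ n v) {v : S} (hv : ¬ k ∣ n v)
    {y : ZMod k} (hy : y ≠ 0) (hmem : y ∈ AddSubgroup.zmultiples ((n v : ℕ) : ZMod k)) :
    ∃ w, ¬ k ∣ n w ∧ ((n w : ℕ) : ZMod k) = y := by
  obtain ⟨ι, _, C, e, -, hcompat⟩ := hass k hk hdvd
  set V : {v : S // ¬ k ∣ n v} := ⟨v, hv⟩ with hV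
  have hxC : ((n v : ℕ) : ZMod k) ∈ C (e V).1 := by
    have := hcompat V
    rw [this]
    exact ((e V).2 : C (e V).1).2
  have hyC : y ∈ C (e V).1 := (AddSubgroup.zmultiples_le.mpr hxC) hmem
  have hne : (⟨y, hyC⟩ : C (e V).1) ≠ 0 := by
    intro h
    exact hy (by simpa using congrArg (Subtype.val) h)
  set c' : {c : C (e V).1 // c ≠ 0} := ⟨⟨y, hyC⟩, hne⟩ with hc'
  refine ⟨(e.symm ⟨(e V).1, c'⟩).1, (e.symm ⟨(e V).1, c'⟩).2, ?_⟩
  have h2 := hcompat (e.symm ⟨(e V).1, c'⟩)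
  rw [h2, Equiv.apply_symm_apply]

/-- A proper divisor is at most half. -/
lemma two_mul_le_of_dvd {d N : ℕ} (h : d ∣ N) (h1 : 0 < d) (h2 : d < N) : 2 * d ≤ N := by
  obtain ⟨c, rfl⟩ := h
  have hc : 2 ≤ c := by
    by_contra hh
    push_neg at hh
    interval_cases c <;> omega
  calc 2 * d = d * 2 := by ring
    _ ≤ d * c := Nat.mul_le_mul_left d hc

/-- Coprime existence: under the hypotheses, if `2 ≤ N` then some value is coprime to `N`
and not divisible by `N`. -/
lemma exists_coprime {S : Type*} [Fintype S] [Nonempty S] (n : S → ℕ)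
    (hpos : ∀ v, 0 < n v) (hass : SatisfiesAssumption n)
    (hgcd : Finset.univ.gcd n = 1) (N : ℕ) (hN : N = Finset.univ.sup n) (hN2 : 2 ≤ N) :
    ∃ v, ¬ N ∣ n v ∧ Nat.gcd (n v) N = 1 := by
  haveI : NeZero N := ⟨by omega⟩
  have hub : ∀ v, n v ≤ N := fun v => hN ▸ Finset.le_sup (Finset.mem_univ v)
  obtain ⟨vN, -, hvN'⟩ := Finset.exists_mem_eq_sup Finset.univ Finset.univ_nonempty n
  have hvN : n vN = N := by rw [hN, hvN']
  have hNdvd : ∃ v, N ∣ n v := ⟨vN, by rw [hvN]⟩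
  by_contra hcon
  push_neg at hcon
  -- there is a value not divisible by N
  have hexv : ∃ v, ¬ N ∣ n v := by
    by_contra hall
    push_neg at hall
    have hdd : N ∣ Finset.univ.gcd n := Finset.dvd_gcd (fun v _ => hall v)
    rw [hgcd] at hdd
    have := Nat.le_of_dvd one_pos hdd
    omega
  obtain ⟨v0, hv0⟩ := hexv
  -- the finset of gcds
  set P : Finset S := Finset.univ.filter (fun v => ¬ N ∣ n v) with hP
  have hPne : P.Nonempty := ⟨v0, by simp [hP, hv0]⟩
  set D : Finset ℕ := P.image (fun v => Nat.gcd (n v) N) with hD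
  have hDne : D.Nonempty := hPne.image _
  set f : ℕ := D.min' hDne with hf
  obtain ⟨v1, hv1P, hv1g⟩ := Finset.mem_image.mp (D.min'_mem hDne)
  rw [← hf] at hv1g
  have hv1 : ¬ N ∣ n v1 := (Finset.mem_filter.mp hv1P).2
  have hfmin : ∀ v, ¬ N ∣ n v → f ≤ Nat.gcd (n v) N := by
    intro v hv
    apply D.min'_le
    exact Finset.mem_image.mpr ⟨v, Finset.mem_filter.mpr ⟨Finset.mem_univ v, hv⟩, rfl⟩
  have hfN : f ∣ N := hv1g ▸ Nat.gcd_dvd_right _ _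
  have hf1 : f ≠ 1 := fun h => hcon v1 hv1 (by rw [hv1g, h])
  have hf0 : 0 < f := by
    rw [← hv1g]
    exact Nat.gcd_pos_of_pos_right _ (by omega)
  have hf2 : 2 ≤ f := by omega
  have hlt : ∀ v, ¬ N ∣ n v → n v < N := by
    intro v hv
    rcases lt_or_eq_of_le (hub v) with h | h
    · exact h
    · exact absurd (h ▸ dvd_refl N) hv
  have hfle : f ≤ n v1 := by
    rw [← hv1g]
    exact Nat.le_of_dvd (hpos v1) (Nat.gcd_dvd_left _ _)
  have hfltN : f < N := lt_of_le_of_lt hfle (hlt v1 hv1)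
  have hdiveq : ∀ v, N ∣ n v → n v = N := by
    intro v hv
    exact Nat.le_antisymm (hub v) (Nat.le_of_dvd (hpos v) hv)
  -- gcds of values with N are < N and ≤ N/2 when nontrivial
  have hgcdlt : ∀ v, ¬ N ∣ n v → Nat.gcd (n v) N < N := by
    intro v hv
    calc Nat.gcd (n v) N ≤ n v := Nat.le_of_dvd (hpos v) (Nat.gcd_dvd_left _ _)
      _ < N := hlt v hv
  -- 2f < N
  have h2f : 2 * f < N := by
    by_contra hge
    push_neg at hge
    have hN2f : N = 2 * f := le_antisymm hge (two_mul_le_of_dvd hfN hf0 hfltN)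
    have hfall : ∀ v, f ∣ n v := by
      intro v
      by_cases hNv : N ∣ n v
      · rw [hdiveq v hNv, hN2f]; exact dvd_mul_left f 2
      · have hg := hfmin v hNv
        have hgdvd : Nat.gcd (n v) N ∣ N := Nat.gcd_dvd_right _ _
        have hgltN : Nat.gcd (n v) N < N := hgcdlt v hNv
        have hgpos : 0 < Nat.gcd (n v) N := by omega
        have h2g := two_mul_le_of_dvd hgdvd hgpos hgltN
        have heq : Nat.gcd (n v) N = f := by omega
        rw [← heq]
        exact Nat.gcd_dvd_left _ _
    have hdd : f ∣ Finset.univ.gcd n := Finset.dvd_gcd (fun v _ => hfall v)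
    rw [hgcd] at hdd
    have := Nat.le_of_dvd one_pos hdd
    omega
  set k : ℕ := N - f with hk
  haveI : NeZero k := ⟨by omega⟩
  have hkpos : 0 < k := by omega
  have hflk : f < k := by omega
  have hfk : f ∣ k := Nat.dvd_sub hfN dvd_rfl
  have hNk : N < 2 * k := by omega
  -- N - f is a value
  have hfz : ((f : ℕ) : ZMod N) ≠ 0 := by
    rw [Ne, ZMod.natCast_eq_zero_iff]
    intro h
    have := Nat.le_of_dvd hf0 h
    omega
  have hbez1 : ((f : ℕ) : ZMod N) ∈ AddSubgroup.zmultiples ((n v1 : ℕ) : ZMod N) := by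
    have := gcd_mem_zmultiples (n v1) N
    rwa [hv1g] at this
  obtain ⟨w, hwN, hweq⟩ := exists_value n hass N (by omega) hNdvd hv1
    (neg_ne_zero.mpr hfz) (AddSubgroup.neg_mem _ hbez1)
  have hwk : n w = k := by
    have hcast : ((k : ℕ) : ZMod N) = -((f : ℕ) : ZMod N) := by
      have : ((k : ℕ) : ZMod N) + ((f : ℕ) : ZMod N) = ((N : ℕ) : ZMod N) := by
        rw [← Nat.cast_add]
        congr 1
        omega
      rw [ZMod.natCast_self] at this
      linear_combination this
    have : ((n w : ℕ) : ZMod N) = ((k : ℕ) : ZMod N) := by rw [hweq, hcast]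
    have hmod := (ZMod.natCast_eq_natCast_iff' _ _ _).mp this
    rw [Nat.mod_eq_of_lt (hlt w hwN), Nat.mod_eq_of_lt (by omega)] at hmod
    exact hmod
  have hkdvd : ∃ v, k ∣ n v := ⟨w, by rw [hwk]⟩
  -- case split at level k
  by_cases hb : ∀ v, ¬ k ∣ n v → f ≤ Nat.gcd (n v) k
  · -- case (b): then f divides every value
    have hfall : ∀ v, f ∣ n v := by
      intro v
      by_cases hkv : k ∣ n v
      · -- n v = k
        have : n v = k := by
          obtain ⟨c, hc⟩ := hkv
          have h1 : 0 < n v := hpos v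
          have h2 : n v ≤ N := hub v
          have hcle : c ≤ 1 := by
            by_contra hh
            push_neg at hh
            have := Nat.mul_le_mul_left k hh
            omega
          have hc1 : c = 1 := by
            rcases Nat.eq_zero_or_pos c with rfl | hcp
            · simp at hc; omega
            · omega
          rw [hc1, Nat.mul_one] at hc
          omega
        rw [this]
        exact hfk
      · by_cases hNv : N ∣ n v
        · rw [hdiveq v hNv]; exact hfN
        · -- gcd (n v) N is itself a value
          set g : ℕ := Nat.gcd (n v) N with hg
          have hgf : f ≤ g := hfmin v hNv
          have hgN : g ∣ N := Nat.gcd_dvd_right _ _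
          have hgltN : g < N := hgcdlt v hNv
          have hgle2 : 2 * g ≤ N := two_mul_le_of_dvd hgN (by omega) hgltN
          have hgz : ((g : ℕ) : ZMod N) ≠ 0 := by
            rw [Ne, ZMod.natCast_eq_zero_iff]
            intro h
            have := Nat.le_of_dvd (by omega) h
            omega
          obtain ⟨w', hw'N, hw'eq⟩ := exists_value n hass N (by omega) hNdvd hNv
            hgz (gcd_mem_zmultiples (n v) N)
          have hw'g : n w' = g := by
            have hmod := (ZMod.natCast_eq_natCast_iff' _ _ _).mp hw'eq
            rw [Nat.mod_eq_of_lt (hlt w' hw'N), Nat.mod_eq_of_lt hgltN] at hmod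
            exact hmod
          -- apply hypothesis (b) to w'
          have hw'k : ¬ k ∣ n w' := by
            rw [hw'g]
            intro h
            have := Nat.le_of_dvd (by omega) h
            omega
          have hble := hb w' hw'k
          rw [hw'g] at hble
          -- gcd g k = gcd g f
          have hgcdeq : Nat.gcd g k = Nat.gcd g f := by
            apply Nat.dvd_antisymm
            · apply Nat.dvd_gcd (Nat.gcd_dvd_left _ _)
              have h1 : Nat.gcd g k ∣ N := (Nat.gcd_dvd_left _ _).trans hgN
              have h2 : Nat.gcd g k ∣ k := Nat.gcd_dvd_right _ _
              have h3 : Nat.gcd g k ∣ N - k := Nat.dvd_sub h1 h2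
              have : N - k = f := by omega
              rwa [this] at h3
            · apply Nat.dvd_gcd (Nat.gcd_dvd_left _ _)
              have h1 : Nat.gcd g f ∣ N := (Nat.gcd_dvd_left _ _).trans hgN
              have h2 : Nat.gcd g f ∣ f := Nat.gcd_dvd_right _ _
              exact Nat.dvd_sub h1 h2
          rw [hgcdeq] at hble
          have hgef : Nat.gcd g f = f :=
            Nat.le_antisymm (Nat.le_of_dvd hf0 (Nat.gcd_dvd_right _ _)) hble
          have hfg : f ∣ g := hgef ▸ Nat.gcd_dvd_left _ _
          exact hfg.trans (Nat.gcd_dvd_left _ _)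
    have hdd : f ∣ Finset.univ.gcd n := Finset.dvd_gcd (fun v _ => hfall v)
    rw [hgcd] at hdd
    have := Nat.le_of_dvd one_pos hdd
    omega
  · -- case (a)
    push_neg at hb
    obtain ⟨v2, hv2k, hv2g⟩ := hb
    set g : ℕ := Nat.gcd (n v2) k with hg
    have hg0 : 0 < g := Nat.gcd_pos_of_pos_right _ hkpos
    have hgltf : g < f := hv2g
    have hgz : ((g : ℕ) : ZMod k) ≠ 0 := by
      rw [Ne, ZMod.natCast_eq_zero_iff]
      intro h
      have := Nat.le_of_dvd hg0 h
      omega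
    obtain ⟨v3, hv3k, hv3eq⟩ := exists_value n hass k hkpos hkdvd hv2k
      hgz (gcd_mem_zmultiples (n v2) k)
    have hmod := (ZMod.natCast_eq_natCast_iff' _ _ _).mp hv3eq
    rw [Nat.mod_eq_of_lt (show g < k by omega)] at hmod
    have hub3 := hub v3
    -- n v3 = g or n v3 = g + k
    have hv3cases : n v3 = g ∨ n v3 = g + k := by
      rcases Nat.lt_or_ge (n v3) k with hlt3 | hge3
      · left
        rw [Nat.mod_eq_of_lt hlt3] at hmod
        exact hmod
      · right
        rw [Nat.mod_eq_sub_mod hge3, Nat.mod_eq_of_lt (by omega : n v3 - k < k)] at hmod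
        omega
    rcases hv3cases with h3 | h3
    · -- n v3 = g < f : contradicts minimality of f
      have hN3 : ¬ N ∣ n v3 := by
        rw [h3]
        intro h
        have := Nat.le_of_dvd hg0 h
        omega
      have := hfmin v3 hN3
      have hle : Nat.gcd (n v3) N ≤ g := by
        rw [h3]
        exact Nat.le_of_dvd hg0 (Nat.gcd_dvd_left _ _)
      omega
    · -- n v3 = g + k = N - (f - g)
      have hN3 : ¬ N ∣ n v3 := by
        rw [h3]
        intro h
        have := Nat.le_of_dvd (by omega) h
        omega
      have hmin3 := hfmin v3 hN3
      set d : ℕ := Nat.gcd (n v3) N with hd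
      have hd1 : d ∣ N := Nat.gcd_dvd_right _ _
      have hd2 : d ∣ n v3 := Nat.gcd_dvd_left _ _
      have hd3 : d ∣ N - n v3 := Nat.dvd_sub hd1 hd2
      have hNv3 : N - n v3 = f - g := by omega
      rw [hNv3] at hd3
      have : d ≤ f - g := Nat.le_of_dvd (by omega) hd3
      omega

/-- Under the Assumption, if the values `n v` are positive with gcd `1` and maximum `N`,
then the set of values taken by `n` is exactly the full interval `{1, 2, …, N}`. -/
theorem range_eq_Icc {S : Type*} [Fintype S] [Nonempty S] (n : S → ℕ)
    (hpos : ∀ v, 0 < n v) (hass : SatisfiesAssumption n)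
    (hgcd : Finset.univ.gcd n = 1) (N : ℕ) (hN : N = Finset.univ.sup n) :
    Set.range n = Set.Icc 1 N := by
  have hub : ∀ v, n v ≤ N := fun v => hN ▸ Finset.le_sup (Finset.mem_univ v)
  obtain ⟨vN, -, hvN'⟩ := Finset.exists_mem_eq_sup Finset.univ Finset.univ_nonempty n
  have hvN : n vN = N := by rw [hN, hvN']
  apply Set.eq_of_subset_of_subset
  · rintro x ⟨v, rfl⟩
    exact ⟨hpos v, hub v⟩
  · rintro m ⟨hm1, hmN⟩
    by_cases hN1 : N ≤ 1
    · obtain ⟨v⟩ := ‹Nonempty S›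
      have h1 := hpos v
      have h2 := hub v
      exact ⟨v, by omega⟩
    · push_neg at hN1
      haveI : NeZero N := ⟨by omega⟩
      rcases eq_or_lt_of_le hmN with rfl | hmlt
      · exact ⟨vN, hvN⟩
      · -- 1 ≤ m < N
        obtain ⟨vc, hvcN, hvcg⟩ := exists_coprime n hpos hass hgcd N hN (by omega)
        have hNdvd : ∃ v, N ∣ n v := ⟨vN, by rw [hvN]⟩
        have hone : ((1 : ℕ) : ZMod N) ∈ AddSubgroup.zmultiples ((n vc : ℕ) : ZMod N) := by
          have := gcd_mem_zmultiples (n vc) N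
          rwa [hvcg] at this
        have hmmem : ((m : ℕ) : ZMod N) ∈ AddSubgroup.zmultiples ((n vc : ℕ) : ZMod N) := by
          have h2 : ((m : ℕ) : ZMod N) = m • (((1 : ℕ) : ZMod N)) := by
            rw [nsmul_eq_mul]
            push_cast
            ring
          rw [h2]
          exact AddSubgroup.nsmul_mem _ hone m
        have hmz : ((m : ℕ) : ZMod N) ≠ 0 := by
          rw [Ne, ZMod.natCast_eq_zero_iff]
          intro h
          have := Nat.le_of_dvd (by omega) h
          omega
        obtain ⟨v3, hv3N, hv3eq⟩ := exists_value n hass N (by omega) hNdvd hvcN hmz hmmem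
        have hmod := (ZMod.natCast_eq_natCast_iff' _ _ _).mp hv3eq
        have hlt3 : n v3 < N := by
          rcases lt_or_eq_of_le (hub v3) with h | h
          · exact h
          · exact absurd (h ▸ dvd_refl N) hv3N
        rw [Nat.mod_eq_of_lt hlt3, Nat.mod_eq_of_lt (by omega)] at hmod
        exact ⟨v3, by omega⟩
end

section
/- Under the Assumption on (S, ñ): let k be a positive integer dividing at least one n_v, and r, s integers not divisible by k such that the subgroup of Z/kZ generated by s is contained in the subgroup generated by r. Then i(r,k) ≤ i(s,k), where i(x,k) = #{v ∈ S : n_v ≡ x mod k}. In particular, if ⟨r⟩ = ⟨s⟩ then i(r,k) = i(s,k). -/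
/-- Auxiliary equivalence: for `x` with `x̄ ≠ 0`, the set of `v` with `n v ≡ x (mod k)`
is in bijection with the set of indices `i` such that `x̄ ∈ C i`. -/
lemma count_equiv_aux {S : Type*} [Fintype S] (n : S → ℕ) (k : ℕ)
    (ι : Type) (C : ι → AddSubgroup (ZMod k))
    (e : {v : S // ¬ k ∣ n v} ≃ (i : ι) × {c : C i // c ≠ 0})
    (hcong : ∀ v : {v : S // ¬ k ∣ n v}, ((n v.1 : ZMod k)) = (((e v).2 : C (e v).1) : ZMod k))
    (x : ℤ) (x0 : (x : ZMod k) ≠ 0) :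
    Nonempty ({v : S // (n v : ZMod k) = (x : ZMod k)} ≃ {i : ι // (x : ZMod k) ∈ C i}) := by
  classical
  have hcong' : ∀ p : (i : ι) × {c : C i // c ≠ 0},
      ((n (e.symm p).1 : ZMod k)) = ((p.2 : C p.1) : ZMod k) := by
    intro p
    have h := hcong (e.symm p)
    rwa [Equiv.apply_symm_apply] at h
  have hvd : ∀ v : S, (n v : ZMod k) = (x : ZMod k) → ¬ k ∣ n v := by
    intro v hv hdv
    apply x0
    rw [← hv]
    exact (ZMod.natCast_eq_zero_iff _ _).mpr hdv
  refine ⟨{ toFun := ?_, invFun := ?_, left_inv := ?_, right_inv := ?_ }⟩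
  · rintro ⟨v, hv⟩
    refine ⟨(e ⟨v, hvd v hv⟩).1, ?_⟩
    have h1 : (x : ZMod k) = ((e ⟨v, hvd v hv⟩).2.1 : ZMod k) := by
      rw [← hv]; exact hcong ⟨v, hvd v hv⟩
    rw [h1]
    exact SetLike.coe_mem _
  · rintro ⟨i, hi⟩
    refine ⟨(e.symm ⟨i, ⟨⟨(x : ZMod k), hi⟩, fun h => x0 (congrArg Subtype.val h)⟩⟩).1, ?_⟩
    rw [hcong' ⟨i, ⟨⟨(x : ZMod k), hi⟩, fun h => x0 (congrArg Subtype.val h)⟩⟩]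
  · rintro ⟨v, hv⟩
    apply Subtype.ext
    dsimp only
    have h1 : (x : ZMod k) = ((e ⟨v, hvd v hv⟩).2.1 : ZMod k) := by
      rw [← hv]; exact hcong ⟨v, hvd v hv⟩
    have hmem : (x : ZMod k) ∈ C (e ⟨v, hvd v hv⟩).1 := by
      rw [h1]; exact SetLike.coe_mem _
    have hw : (⟨(e ⟨v, hvd v hv⟩).1,
        ⟨⟨(x : ZMod k), hmem⟩, fun h => x0 (congrArg Subtype.val h)⟩⟩ :
        (i : ι) × {c : C i // c ≠ 0}) = e ⟨v, hvd v hv⟩ := by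
      refine congrArg (Sigma.mk _) (Subtype.ext (Subtype.ext ?_))
      exact h1
    rw [hw, Equiv.symm_apply_apply]
  · rintro ⟨i, hi⟩
    apply Subtype.ext
    dsimp only
    rw [Equiv.apply_symm_apply]

/-- Under the Assumption: if `k` is a positive integer dividing at least one `n v`, and
`r, s` are integers not divisible by `k` with `⟨s⟩ ⊆ ⟨r⟩` in `ℤ/kℤ`, then
`i(r,k) ≤ i(s,k)` where `i(x,k) = #{v : n v ≡ x mod k}`; in particular if
`⟨r⟩ = ⟨s⟩` the two counts are equal. -/
theorem count_mod_le {S : Type*} [Fintype S] (n : S → ℕ)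
    (hpos : ∀ v, 0 < n v) (hass : SatisfiesAssumption n)
    (k : ℕ) (hk : 0 < k) (hdvd : ∃ v, k ∣ n v) (r s : ℤ)
    (hr : ¬ (k : ℤ) ∣ r) (hs : ¬ (k : ℤ) ∣ s)
    (hsub : AddSubgroup.zmultiples ((s : ZMod k)) ≤ AddSubgroup.zmultiples ((r : ZMod k))) :
    (Finset.univ.filter fun v => ((n v : ZMod k)) = (r : ZMod k)).card ≤
        (Finset.univ.filter fun v => ((n v : ZMod k)) = (s : ZMod k)).card ∧
      (AddSubgroup.zmultiples ((s : ZMod k)) = AddSubgroup.zmultiples ((r : ZMod k)) →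
        (Finset.univ.filter fun v => ((n v : ZMod k)) = (r : ZMod k)).card =
          (Finset.univ.filter fun v => ((n v : ZMod k)) = (s : ZMod k)).card) := by
  classical
  obtain ⟨ι, hι, C, e, hcyc, hcong⟩ := hass k hk hdvd
  have key : ∀ (x : ℤ), ¬ (k : ℤ) ∣ x →
      (Finset.univ.filter fun v => ((n v : ZMod k)) = (x : ZMod k)).card
        = (Finset.univ.filter fun i => (x : ZMod k) ∈ C i).card := by
    intro x hx
    have x0 : (x : ZMod k) ≠ 0 := by
      simpa [ZMod.intCast_zmod_eq_zero_iff_dvd] using hx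
    obtain ⟨E⟩ := count_equiv_aux n k ι C e hcong x x0
    rw [← Fintype.card_subtype, ← Fintype.card_subtype]
    exact Fintype.card_congr E
  have mono : ∀ (a b : ℤ), ¬ (k : ℤ) ∣ a → ¬ (k : ℤ) ∣ b →
      AddSubgroup.zmultiples ((b : ZMod k)) ≤ AddSubgroup.zmultiples ((a : ZMod k)) →
      (Finset.univ.filter fun v => ((n v : ZMod k)) = (a : ZMod k)).card ≤
        (Finset.univ.filter fun v => ((n v : ZMod k)) = (b : ZMod k)).card := by
    intro a b ha hb hab
    rw [key a ha, key b hb]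
    apply Finset.card_le_card
    intro i hi
    simp only [Finset.mem_filter, Finset.mem_univ, true_and] at hi ⊢
    obtain ⟨m, hm⟩ := hab (AddSubgroup.mem_zmultiples (b : ZMod k))
    rw [← hm]
    exact AddSubgroup.zsmul_mem _ hi m
  exact ⟨mono r s hr hs hsub, fun heq =>
    le_antisymm (mono r s hr hs hsub) (mono s r hs hr heq.ge)⟩
end

section
/- Let N ∈ {1,2,3,4}, and let (S, ñ) satisfy the Assumption with gcd of the n_v equal to 1 and max n_v = N. Set g = ∑_v n_v and d_x = #{v : x | n_v}. Then for any integers x, y ≤ N that are adjacent with respect to N (i.e., there exist r, s coprime to x, y respectively with r/x and s/y consecutive in the Farey sequence F_N), one has g = (xy/2)(d_x + d_y). -/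
lemma residue_count {S : Type*} [Fintype S] (n : S → ℕ) (hass : SatisfiesAssumption n)
    (k : ℕ) (hk : 0 < k) (hd : ∃ v, k ∣ n v) (c : ZMod k) (hc : c ≠ 0) :
    (Finset.univ.filter fun v => (n v : ZMod k) = c).card
      = (Finset.univ.filter fun v => (n v : ZMod k) = -c).card := by
  classical
  haveI : NeZero k := ⟨hk.ne'⟩
  obtain ⟨ι, hι, C, e, -, he⟩ := hass k hk hd
  have key : ∀ c : ZMod k, c ≠ 0 →
      (Finset.univ.filter fun v => (n v : ZMod k) = c).card
        = Fintype.card {z : (i : ι) × {x : C i // x ≠ 0} // ((z.2 : C z.1) : ZMod k) = c} := by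
    intro c hc
    rw [← Fintype.card_subtype]
    have E2 : {w : {v : S // ¬ k ∣ n v} // (n w.1 : ZMod k) = c}
        ≃ {z : (i : ι) × {x : C i // x ≠ 0} // ((z.2 : C z.1) : ZMod k) = c} :=
      e.subtypeEquiv fun w => by rw [he w]
    refine Fintype.card_congr (Equiv.trans ?_ E2)
    exact
    { toFun := fun v => ⟨⟨v.1, fun h => hc (v.2.symm.trans
        ((ZMod.natCast_eq_zero_iff _ _).mpr h))⟩, v.2⟩
      invFun := fun w => ⟨w.1.1, w.2⟩
      left_inv := fun v => rfl
      right_inv := fun w => rfl }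
  rw [key c hc, key (-c) (neg_ne_zero.mpr hc)]
  refine Fintype.card_congr ?_
  exact
  { toFun := fun z => ⟨⟨z.1.1, ⟨-z.1.2.1, neg_ne_zero.mpr z.1.2.2⟩⟩, by
      simp only [AddSubgroup.coe_neg]; rw [z.2]⟩
    invFun := fun z => ⟨⟨z.1.1, ⟨-z.1.2.1, neg_ne_zero.mpr z.1.2.2⟩⟩, by
      simp only [AddSubgroup.coe_neg]; rw [z.2, neg_neg]⟩
    left_inv := fun z => by rcases z with ⟨⟨i, x, hx⟩, hz⟩; simp
    right_inv := fun z => by rcases z with ⟨⟨i, x, hx⟩, hz⟩; simp }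

lemma count_eq {S : Type*} [Fintype S] (n : S → ℕ) (N : ℕ) (hub : ∀ v, n v ≤ N)
    (P : ℕ → Prop) [DecidablePred P] [DecidablePred fun v => P (n v)] :
    (Finset.univ.filter fun v => P (n v)).card
      = ∑ m ∈ Finset.range (N+1), if P m then (Finset.univ.filter fun v => n v = m).card else 0 := by
  classical
  rw [Finset.card_eq_sum_card_fiberwise (f := n) (t := Finset.range (N+1))
    (fun v _ => Finset.mem_range.mpr (Nat.lt_succ_of_le (hub v)))]
  refine Finset.sum_congr rfl fun m _ => ?_
  rw [Finset.filter_filter]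
  by_cases hP : P m
  · rw [if_pos hP]
    refine Finset.card_bij (fun a _ => a) (fun a ha => ?_) (fun _ _ _ _ h => h)
      (fun b hb => ⟨b, ?_, rfl⟩)
    · simp only [Finset.mem_filter] at ha ⊢
      exact ⟨ha.1, ha.2.2⟩
    · simp only [Finset.mem_filter] at hb ⊢
      exact ⟨hb.1, hb.2 ▸ hP, hb.2⟩
  · rw [if_neg hP, Finset.card_eq_zero, Finset.filter_eq_empty_iff]
    rintro v - ⟨h1, h2⟩
    exact hP (h2 ▸ h1)

lemma sum_eq {S : Type*} [Fintype S] (n : S → ℕ) (N : ℕ) (hub : ∀ v, n v ≤ N) :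
    ∑ v, n v = ∑ m ∈ Finset.range (N+1), m * (Finset.univ.filter fun v => n v = m).card := by
  classical
  rw [← Finset.sum_fiberwise_of_maps_to (g := n) (t := Finset.range (N+1))
    (fun v _ => Finset.mem_range.mpr (Nat.lt_succ_of_le (hub v)))]
  refine Finset.sum_congr rfl fun m _ => ?_
  rw [Finset.sum_congr rfl (fun v hv => (Finset.mem_filter.mp hv).2), Finset.sum_const,
    smul_eq_mul, mul_comm]

set_option maxHeartbeats 2000000

/-- Let `N ∈ {1,2,3,4}` and let `(S, n)` satisfy the Assumption with gcd of the values
equal to `1` and maximum `N`. If `x, y ≤ N` are adjacent with respect to `N` (there are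
`r, s` coprime to `x, y` with `r/x < s/y` consecutive in the Farey sequence `F_N`), then
`g = (xy/2)(d_x + d_y)`, stated as `2g = xy(d_x + d_y)`. -/
theorem farey_adjacent_identity {S : Type*} [Fintype S] (n : S → ℕ)
    (hpos : ∀ v, 0 < n v) (hass : SatisfiesAssumption n)
    (hgcd : Finset.univ.gcd n = 1) (N : ℕ) (hN : N = Finset.univ.sup n)
    (hN4 : N ∈ ({1, 2, 3, 4} : Set ℕ))
    (x y : ℕ) (hx : 0 < x) (hxN : x ≤ N) (hy : 0 < y) (hyN : y ≤ N)
    (hadj : ∃ r s : ℕ, r ≤ x ∧ s ≤ y ∧ Nat.gcd r x = 1 ∧ Nat.gcd s y = 1 ∧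
      (r : ℚ) / x < (s : ℚ) / y ∧
      ∀ p q : ℕ, 0 < q → q ≤ N → p ≤ q →
        ¬((r : ℚ) / x < (p : ℚ) / q ∧ (p : ℚ) / q < (s : ℚ) / y)) :
    2 * ∑ v, n v =
      x * y * ((Finset.univ.filter fun v => x ∣ n v).card +
        (Finset.univ.filter fun v => y ∣ n v).card) := by
  have hub : ∀ v, n v ≤ N := fun v => hN ▸ Finset.le_sup (Finset.mem_univ v)
  have hne : (Finset.univ : Finset S).Nonempty := by
    rcases (Finset.univ : Finset S).eq_empty_or_nonempty with h | h
    · rw [h, Finset.gcd_empty] at hgcd; exact absurd hgcd (by norm_num)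
    · exact h
  have hmax : ∃ v, n v = N := by
    obtain ⟨v, -, hv⟩ := Finset.exists_mem_eq_sup Finset.univ hne n
    exact ⟨v, (hN.trans hv).symm⟩
  have hA0 : (Finset.univ.filter fun v => n v = 0).card = 0 := by
    rw [Finset.card_eq_zero, Finset.filter_eq_empty_iff]
    exact fun v _ => (hpos v).ne'
  obtain ⟨r, s, hr, hs, hrx, hsy, hlt, hmid⟩ := hadj
  simp only [Set.mem_insert_iff, Set.mem_singleton_iff] at hN4
  rcases hN4 with rfl | rfl | rfl | rfl
  · -- N = 1
    have h1 : ∀ v, n v = 1 := fun v => le_antisymm (hub v) (hpos v)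
    interval_cases x
    interval_cases y
    have hfil : ((Finset.univ : Finset S).filter fun v => 1 ∣ n v) = Finset.univ :=
      Finset.filter_true_of_mem fun v _ => one_dvd _
    rw [hfil]
    have : ∑ v, n v = (Finset.univ : Finset S).card := by
      rw [Finset.sum_congr rfl fun v _ => h1 v, Finset.sum_const, smul_eq_mul, mul_one]
    rw [this]; ring
  · -- N = 2
    interval_cases x <;> interval_cases y <;>
      first
        | (rw [sum_eq n 2 hub]
           simp only [count_eq n 2 hub (fun m => 1 ∣ m), count_eq n 2 hub (fun m => 2 ∣ m)]
           simp (config := { decide := true }) [Finset.sum_range_succ, hA0]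
           omega)
        | (exfalso
           interval_cases r <;> interval_cases s <;>
            first
              | (revert hrx; decide)
              | (revert hsy; decide)
              | (revert hlt; norm_num; done)
              | (refine hmid 1 2 ?_ ?_ ?_ ⟨?_, ?_⟩ <;> (norm_num; done)))
  · -- N = 3
    have h3dvd : ∃ v, (3:ℕ) ∣ n v := by
      obtain ⟨v, hv⟩ := hmax; exact ⟨v, by rw [hv]⟩
    have key3 : (Finset.univ.filter fun v => n v = 1).card
        = (Finset.univ.filter fun v => n v = 2).card := by
      have hres := residue_count n hass 3 (by norm_num) h3dvd 1 (by decide)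
      rw [count_eq n 3 hub (fun m => ((m:ℕ) : ZMod 3) = 1),
        count_eq n 3 hub (fun m => ((m:ℕ) : ZMod 3) = -1)] at hres
      simpa (config := { decide := true }) [Finset.sum_range_succ, hA0] using hres
    interval_cases x <;> interval_cases y <;>
      first
        | (rw [sum_eq n 3 hub]
           simp only [count_eq n 3 hub (fun m => 1 ∣ m), count_eq n 3 hub (fun m => 2 ∣ m),
             count_eq n 3 hub (fun m => 3 ∣ m)]
           simp (config := { decide := true }) [Finset.sum_range_succ, hA0]
           omega)
        | (exfalso
           interval_cases r <;> interval_cases s <;>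
            first
              | (revert hrx; decide)
              | (revert hsy; decide)
              | (revert hlt; norm_num; done)
              | (refine hmid 1 3 ?_ ?_ ?_ ⟨?_, ?_⟩ <;> (norm_num; done))
              | (refine hmid 1 2 ?_ ?_ ?_ ⟨?_, ?_⟩ <;> (norm_num; done))
              | (refine hmid 2 3 ?_ ?_ ?_ ⟨?_, ?_⟩ <;> (norm_num; done)))
  · -- N = 4
    have h4dvd : ∃ v, (4:ℕ) ∣ n v := by
      obtain ⟨v, hv⟩ := hmax; exact ⟨v, by rw [hv]⟩
    have key4 : (Finset.univ.filter fun v => n v = 1).card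
        = (Finset.univ.filter fun v => n v = 3).card := by
      have hres := residue_count n hass 4 (by norm_num) h4dvd 1 (by decide)
      rw [count_eq n 4 hub (fun m => ((m:ℕ) : ZMod 4) = 1),
        count_eq n 4 hub (fun m => ((m:ℕ) : ZMod 4) = -1)] at hres
      simpa (config := { decide := true }) [Finset.sum_range_succ, hA0] using hres
    have ha3pos : 0 < (Finset.univ.filter fun v => n v = 3).card := by
      rcases Nat.eq_zero_or_pos (Finset.univ.filter fun v => n v = 3).card with h0 | h
      · exfalso
        have h1 : ∀ v, n v ≠ 1 := by
          have := Finset.filter_eq_empty_iff.mp (Finset.card_eq_zero.mp (key4.trans h0))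
          exact fun v => this (Finset.mem_univ v)
        have h3 : ∀ v, n v ≠ 3 := by
          have := Finset.filter_eq_empty_iff.mp (Finset.card_eq_zero.mp h0)
          exact fun v => this (Finset.mem_univ v)
        have h2 : (2:ℕ) ∣ Finset.univ.gcd n := by
          refine Finset.dvd_gcd fun v _ => ?_
          have := hpos v; have := hub v; have := h1 v; have := h3 v
          omega
        rw [hgcd] at h2
        omega
      · exact h
    have h3dvd : ∃ v, (3:ℕ) ∣ n v := by
      obtain ⟨v, hv⟩ := Finset.card_pos.mp ha3pos
      exact ⟨v, by rw [(Finset.mem_filter.mp hv).2]⟩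
    have key3 : (Finset.univ.filter fun v => n v = 1).card
          + (Finset.univ.filter fun v => n v = 4).card
        = (Finset.univ.filter fun v => n v = 2).card := by
      have hres := residue_count n hass 3 (by norm_num) h3dvd 1 (by decide)
      rw [count_eq n 4 hub (fun m => ((m:ℕ) : ZMod 3) = 1),
        count_eq n 4 hub (fun m => ((m:ℕ) : ZMod 3) = -1)] at hres
      simpa (config := { decide := true }) [Finset.sum_range_succ, hA0] using hres
    interval_cases x <;> interval_cases y <;>
      first
        | (rw [sum_eq n 4 hub]
           simp only [count_eq n 4 hub (fun m => 1 ∣ m), count_eq n 4 hub (fun m => 2 ∣ m),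
             count_eq n 4 hub (fun m => 3 ∣ m), count_eq n 4 hub (fun m => 4 ∣ m)]
           simp (config := { decide := true }) [Finset.sum_range_succ, hA0]
           omega)
        | (exfalso
           interval_cases r <;> interval_cases s <;>
            first
              | (revert hrx; decide)
              | (revert hsy; decide)
              | (revert hlt; norm_num; done)
              | (refine hmid 1 4 ?_ ?_ ?_ ⟨?_, ?_⟩ <;> (norm_num; done))
              | (refine hmid 1 3 ?_ ?_ ?_ ⟨?_, ?_⟩ <;> (norm_num; done))
              | (refine hmid 1 2 ?_ ?_ ?_ ⟨?_, ?_⟩ <;> (norm_num; done))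
              | (refine hmid 2 3 ?_ ?_ ?_ ⟨?_, ?_⟩ <;> (norm_num; done))
              | (refine hmid 3 4 ?_ ?_ ?_ ⟨?_, ?_⟩ <;> (norm_num; done)))
end

section
/- Let D be a finite tree and ℓ a group of automorphisms of D. If v₁ and v₂ are two vertices of D connected by an edge, then either Stab(v₁) ⊆ Stab(v₂) or Stab(v₂) ⊆ Stab(v₁), where Stab(v) denotes the stabilizer of v in ℓ. -/
open SimpleGraph

private lemma tree_path_length_eq_dist {V : Type*} {G : SimpleGraph V} (hT : G.IsTree)
    {u v : V} (p : G.Walk u v) (hp : p.IsPath) : p.length = G.dist u v := by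
  obtain ⟨q, hq, hql⟩ := hT.isConnected.exists_path_of_dist u v
  have huniq := (isAcyclic_iff_path_unique.mp hT.IsAcyclic) ⟨p, hp⟩ ⟨q, hq⟩
  rw [← hql]
  exact congrArg SimpleGraph.Walk.length (congrArg Subtype.val huniq)

private lemma tree_dist_adj_cases {V : Type*} [DecidableEq V] {G : SimpleGraph V} (hT : G.IsTree)
    {a b : V} (hab : G.Adj a b) (x : V) :
    G.dist x a = G.dist x b + 1 ∨ G.dist x b = G.dist x a + 1 := by
  obtain ⟨p, hp, hpl⟩ := hT.isConnected.exists_path_of_dist x a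
  by_cases hb : b ∈ p.support
  · left
    have htake : (p.takeUntil b hb).length = G.dist x b :=
      tree_path_length_eq_dist hT _ (hp.takeUntil hb)
    have hdrop : (p.dropUntil b hb).length = G.dist b a :=
      tree_path_length_eq_dist hT _ (hp.dropUntil hb)
    have hsplit := p.take_spec hb
    have hlen : (p.takeUntil b hb).length + (p.dropUntil b hb).length = p.length := by
      rw [← SimpleGraph.Walk.length_append, hsplit]
    have hba : G.dist b a = 1 := SimpleGraph.dist_eq_one_iff_adj.mpr hab.symm
    omega
  · right
    have hpath : (p.concat hab).IsPath := by
      rw [← SimpleGraph.Walk.isPath_reverse_iff, SimpleGraph.Walk.reverse_concat]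
      refine SimpleGraph.Walk.IsPath.cons (hp.reverse) ?_
      rw [SimpleGraph.Walk.support_reverse, List.mem_reverse]
      exact hb
    have := tree_path_length_eq_dist hT _ hpath
    rw [SimpleGraph.Walk.length_concat, hpl] at this
    omega

/-- Let `D` be a finite tree and `ℓ` a group of automorphisms of `D`. If `v₁` and `v₂`
are two vertices connected by an edge, then either `Stab(v₁) ⊆ Stab(v₂)` or
`Stab(v₂) ⊆ Stab(v₁)`. -/
theorem tree_aut_stabilizer_nested {V : Type*} [Fintype V] (G : SimpleGraph V)
    (hT : G.IsTree) {H : Type*} [Group H] [MulAction H V]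
    (hact : ∀ (g : H) (v w : V), G.Adj (g • v) (g • w) ↔ G.Adj v w)
    (v₁ v₂ : V) (hadj : G.Adj v₁ v₂) :
    (∀ g : H, g • v₁ = v₁ → g • v₂ = v₂) ∨ (∀ g : H, g • v₂ = v₂ → g • v₁ = v₁) := by
  classical
  -- distances are preserved by the action
  have hdist_le : ∀ (g : H) (x y : V), G.dist (g • x) (g • y) ≤ G.dist x y := by
    intro g x y
    obtain ⟨p, hpl⟩ := hT.isConnected.exists_walk_length_eq_dist x y
    let f : G →g G := ⟨fun v => g • v, fun {a b} h => (hact g a b).2 h⟩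
    calc G.dist (g • x) (g • y) ≤ (p.map f).length := SimpleGraph.dist_le _
      _ = p.length := p.length_map f
      _ = G.dist x y := hpl
  have hdist : ∀ (g : H) (x y : V), G.dist (g • x) (g • y) = G.dist x y := by
    intro g x y
    refine le_antisymm (hdist_le g x y) ?_
    have := hdist_le g⁻¹ (g • x) (g • y)
    simpa using this
  -- key step
  have key : ∀ {a b : V}, G.Adj a b → ∀ (g : H), g • a = a → g • b ≠ b →
      ∀ x, G.dist x b < G.dist x a → G.dist (g • x) a < G.dist (g • x) b := by
    intro a b hab g hga hgb x hx
    have hx' : G.dist x a = G.dist x b + 1 := by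
      rcases tree_dist_adj_cases hT hab x with h | h
      · exact h
      · omega
    set y := g • x with hy
    have hya : G.dist y a = G.dist x b + 1 := by
      have : G.dist y (g • a) = G.dist x a := hdist g x a
      rwa [hga, hx'] at this
    have hygb : G.dist y (g • b) = G.dist x b := hdist g x b
    rcases tree_dist_adj_cases hT hab y with h | h
    · -- G.dist y a = G.dist y b + 1 : derive contradiction
      exfalso
      have hyb : G.dist y b = G.dist x b := by omega
      obtain ⟨p, hp, hpl⟩ := hT.isConnected.exists_path_of_dist y b
      obtain ⟨q, hq, hql⟩ := hT.isConnected.exists_path_of_dist y (g • b)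
      have egb : G.Adj (g • b) a := by
        have := (hact g b a).2 hab.symm
        rwa [hga] at this
      have hP : (p.concat hab.symm).IsPath := by
        refine (p.concat hab.symm).isPath_of_length_eq_dist ?_
        rw [SimpleGraph.Walk.length_concat, hpl, hyb]
        omega
      have hQ : (q.concat egb).IsPath := by
        refine (q.concat egb).isPath_of_length_eq_dist ?_
        rw [SimpleGraph.Walk.length_concat, hql, hygb]
        omega
      have huniq := (isAcyclic_iff_path_unique.mp hT.IsAcyclic)
        ⟨p.concat hab.symm, hP⟩ ⟨q.concat egb, hQ⟩
      have hwalks : p.concat hab.symm = q.concat egb :=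
        congrArg Subtype.val huniq
      obtain ⟨hbv, -⟩ := SimpleGraph.Walk.concat_inj hwalks
      exact hgb hbv.symm
    · omega
  by_contra hcon
  push_neg at hcon
  obtain ⟨⟨g, hg1, hg2⟩, ⟨k, hk2, hk1⟩⟩ := hcon
  -- the two "branches"
  set A : Finset V := Finset.univ.filter (fun x => G.dist x v₁ < G.dist x v₂) with hA
  set B : Finset V := Finset.univ.filter (fun x => G.dist x v₂ < G.dist x v₁) with hB
  have hne : v₁ ≠ v₂ := hadj.ne
  have hv₁A : v₁ ∈ A := by
    simp only [hA, Finset.mem_filter, Finset.mem_univ, true_and]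
    rw [SimpleGraph.dist_self]
    exact hT.isConnected.pos_dist_of_ne hne
  have hv₂B : v₂ ∈ B := by
    simp only [hB, Finset.mem_filter, Finset.mem_univ, true_and]
    rw [SimpleGraph.dist_self]
    exact hT.isConnected.pos_dist_of_ne hne.symm
  have hcard : ∀ {a b : V} (hab : G.Adj a b) (g : H), g • a = a → g • b ≠ b →
      ∀ (S T : Finset V), (∀ x, x ∈ S ↔ G.dist x b < G.dist x a) →
      (∀ x, x ∈ T ↔ G.dist x a < G.dist x b) → a ∈ T → S.card < T.card := by
    intro a b hab g hga hgb S T hS hT' haT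
    have himg : S.image (fun x => g • x) ⊆ T.erase a := by
      intro y hy
      simp only [Finset.mem_image] at hy
      obtain ⟨x, hxS, rfl⟩ := hy
      have hxd := (hS x).1 hxS
      have hxa : x ≠ a := by
        rintro rfl
        rw [SimpleGraph.dist_self] at hxd
        omega
      refine Finset.mem_erase.mpr ⟨?_, (hT' _).2 (key hab g hga hgb x hxd)⟩
      intro hcontra
      exact hxa (by rw [← hga] at hcontra; exact smul_left_cancel g hcontra)
    calc S.card = (S.image (fun x => g • x)).card :=
          (Finset.card_image_of_injective S (MulAction.injective g)).symm
      _ ≤ (T.erase a).card := Finset.card_le_card himg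
      _ < T.card := Finset.card_erase_lt_of_mem haT
  have h1 : B.card < A.card := by
    refine hcard hadj g hg1 hg2 B A ?_ ?_ hv₁A
    · intro x; simp [hB]
    · intro x; simp [hA]
  have h2 : A.card < B.card := by
    refine hcard hadj.symm k hk2 hk1 A B ?_ ?_ hv₂B
    · intro x; simp [hA]
    · intro x; simp [hB]
  omega
end

section
/- Let Φ be an irreducible root system with extended set of simple roots Δ̃ and coroot integers g_a. Let Ĩ be a proper subset of Δ̃, let Q^∨ be the full coroot lattice and Q^∨_Ĩ the sublattice spanned by { a^∨ : a ∈ Ĩ }. Then the torsion subgroup of Q^∨/Q^∨_Ĩ is cyclic of order k = gcd{ g_a : a ∉ Ĩ }, generated by the class of ζ = −(1/k) ∑_{a∈Ĩ} g_a a^∨. -/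
open scoped RealInnerProductSpace

variable {V : Type*}

/-- The coroot `a^∨ = 2a/⟪a,a⟫` of a vector `a`, with respect to the inner product. -/
noncomputable def coroot [NormedAddCommGroup V] [InnerProductSpace ℝ V] (a : V) : V :=
  (2 / ⟪a, a⟫) • a

/-- A (possibly non-reduced) root system on an inner product space: a finite spanning
set of nonzero vectors, integrality of the Cartan numbers `⟪b, a^∨⟫`, and closure
under the reflections `b ↦ b − ⟪b, a^∨⟫ a`. -/
def IsRootSystem [NormedAddCommGroup V] [InnerProductSpace ℝ V] (Φ : Set V) : Prop :=
  Φ.Finite ∧ (0 : V) ∉ Φ ∧ Submodule.span ℝ Φ = ⊤ ∧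
    (∀ a ∈ Φ, ∀ b ∈ Φ, ∃ n : ℤ, ⟪b, coroot a⟫ = (n : ℝ)) ∧
    (∀ a ∈ Φ, ∀ b ∈ Φ, b - ⟪b, coroot a⟫ • a ∈ Φ)

/-- A root system is reduced if the only multiples of a root `a` in it are `±a`. -/
def IsReducedRS [NormedAddCommGroup V] [InnerProductSpace ℝ V] (Φ : Set V) : Prop :=
  ∀ a ∈ Φ, ∀ t : ℝ, t • a ∈ Φ → t = 1 ∨ t = -1

/-- A root system is irreducible if it is nonempty and cannot be partitioned into two
nonempty mutually orthogonal subsets. -/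
def IsIrreducibleRS [NormedAddCommGroup V] [InnerProductSpace ℝ V] (Φ : Set V) : Prop :=
  Φ.Nonempty ∧ ∀ Φ₁ Φ₂ : Set V, Φ = Φ₁ ∪ Φ₂ →
    (∀ a ∈ Φ₁, ∀ b ∈ Φ₂, ⟪a, b⟫ = 0) → Φ₁ = ∅ ∨ Φ₂ = ∅

/-! The coroots of `Δ̃` generate `Q^∨` subject to the single relation `∑ g_a a^∨ = 0`, because the
simple coroots are linearly independent. Hence, with `J = Δ̃ \ Ĩ`, an element `∑ u_a a^∨` lies in
`Q^∨_Ĩ` iff `(u_a)_{a ∈ J}` is an integer multiple of `(g_a)_{a ∈ J}`, i.e.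
`Q^∨/Q^∨_Ĩ ≅ ℤ^J / ℤ g|_J`. Its torsion is generated by the primitive vector `g|_J / k`, of order
`k`, and `k ζ = ∑_{a ∈ J} g_a a^∨` identifies this class with that of `ζ`. -/

section

open Finset Submodule

lemma dvd_of_forall_dvd_mul_of_gcd_eq_one {ι : Type*} {s : Finset ι} {w : ι → ℕ}
    (hw : s.gcd w = 1) {n c : ℤ} (h : ∀ i ∈ s, n ∣ c * w i) : n ∣ c := by
  have hgcd : n.natAbs ∣ s.gcd fun i => c.natAbs * w i :=
    dvd_gcd fun i hi => by simpa [Int.natAbs_mul] using Int.natAbs_dvd_natAbs.mpr (h i hi)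
  rwa [Finset.gcd_mul_left, normalize_eq, hw, mul_one, Int.natAbs_dvd_natAbs] at hgcd

section Relations

variable {κ M : Type*} [Fintype κ] [AddCommGroup M]

def RelationsSpannedBy (f : κ → M) (g : κ → ℕ) : Prop :=
  ∀ c : κ → ℤ, ∑ o, c o • f o = 0 ↔ ∃ m : ℤ, ∀ o, c o = m * g o

namespace RelationsSpannedBy

variable {f : κ → M} {g : κ → ℕ}

lemma sum_smul_eq_zero (hf : RelationsSpannedBy f g) : ∑ o, (g o : ℤ) • f o = 0 :=
  (hf _).mpr ⟨1, fun _ => (one_mul _).symm⟩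

lemma sum_smul_mem_span_image_iff (hf : RelationsSpannedBy f g) (S : Finset κ) (u : κ → ℤ) :
    ∑ o, u o • f o ∈ span ℤ (f '' S) ↔ ∃ m : ℤ, ∀ o ∉ S, u o = m * g o := by
  classical
  rw [mem_span_image_finset_iff_exists_fun']
  constructor
  · rintro ⟨c, hc⟩
    obtain ⟨m, hm⟩ := (hf fun o => u o - if o ∈ S then c o else 0).mp (by
      simp only [sub_smul, sum_sub_distrib, ite_smul, zero_smul, sum_ite_mem, univ_inter, hc,
        sub_self])
    exact ⟨m, fun o ho => by simpa [ho] using hm o⟩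
  · rintro ⟨m, hm⟩
    refine ⟨fun o => u o - m * g o, ?_⟩
    calc ∑ o ∈ S, (u o - m * g o) • f o = ∑ o, (u o - m * g o) • f o :=
          sum_subset (subset_univ S) fun o _ ho => by rw [hm o ho, sub_self, zero_smul]
      _ = ∑ o, u o • f o - m • ∑ o, (g o : ℤ) • f o := by
          simp only [sub_smul, mul_smul, sum_sub_distrib, smul_sum]
      _ = ∑ o, u o • f o := by rw [hf.sum_smul_eq_zero, smul_zero, sub_zero]

lemma mk_eq_zero_iff (hf : RelationsSpannedBy f g) (S : Finset κ) {L : Submodule ℤ M} {y : L}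
    {u : κ → ℤ} (hy : (y : M) = ∑ o, u o • f o) :
    (Submodule.Quotient.mk y : L ⧸ (span ℤ (f '' S)).comap L.subtype) = 0 ↔
      ∃ m : ℤ, ∀ o ∉ S, u o = m * g o := by
  rw [Quotient.mk_eq_zero, mem_comap, subtype_apply, hy, hf.sum_smul_mem_span_image_iff]

lemma zsmul_mk_eq_zero_iff (hf : RelationsSpannedBy f g) (S : Finset κ) {L : Submodule ℤ M}
    {y : L} {u : κ → ℤ} (hy : (y : M) = ∑ o, u o • f o) (n : ℤ) :
    n • (Submodule.Quotient.mk y : L ⧸ (span ℤ (f '' S)).comap L.subtype) = 0 ↔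
      ∃ m : ℤ, ∀ o ∉ S, n * u o = m * g o := by
  rw [← Quotient.mk_smul]
  exact hf.mk_eq_zero_iff S (by simp only [Submodule.coe_smul, hy, smul_sum, mul_smul])

end RelationsSpannedBy

section CoprimePart

variable [DecidableEq κ] (S : Finset κ) (g : κ → ℕ)

def coprimePart (o : κ) : ℕ :=
  if o ∈ S then 0 else g o / (univ \ S).gcd g

lemma coprimePart_of_mem {o : κ} (ho : o ∈ S) : coprimePart S g o = 0 := if_pos ho

lemma gcd_mul_coprimePart {o : κ} (ho : o ∉ S) :
    (↑((univ \ S).gcd g) : ℤ) * coprimePart S g o = g o := by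
  rw [coprimePart, if_neg ho]
  exact_mod_cast Nat.mul_div_cancel' (gcd_dvd (by simpa using ho))

variable {S g}

lemma gcd_coprimePart (hk : (univ \ S).gcd g ≠ 0) : (univ \ S).gcd (coprimePart S g) = 1 := by
  obtain ⟨o, ho, hgo⟩ : ∃ o ∈ univ \ S, g o ≠ 0 := by
    simpa using mt Finset.gcd_eq_zero_iff.mpr hk
  rw [← gcd_div_eq_one ho hgo]
  exact gcd_congr rfl fun o ho => if_neg (by simpa using ho)

lemma exists_coprimePart_ne_zero (hk : (univ \ S).gcd g ≠ 0) :
    ∃ o ∉ S, coprimePart S g o ≠ 0 := by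
  by_contra! h
  have := gcd_coprimePart hk
  rw [Finset.gcd_eq_zero_iff.mpr fun o ho => h o (by simpa using ho)] at this
  exact zero_ne_one this

end CoprimePart

namespace RelationsSpannedBy

variable [DecidableEq κ] {f : κ → M} {g : κ → ℕ} {S : Finset κ}

lemma addOrderOf_mk (hf : RelationsSpannedBy f g) (hk : (univ \ S).gcd g ≠ 0)
    {L : Submodule ℤ M} {z : L} (hz : (z : M) = ∑ o, (coprimePart S g o : ℤ) • f o) :
    addOrderOf (Submodule.Quotient.mk z : L ⧸ (span ℤ (f '' S)).comap L.subtype) =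
      (univ \ S).gcd g := by
  obtain ⟨o₀, ho₀, hz₀⟩ := exists_coprimePart_ne_zero hk
  refine Nat.dvd_right_iff_eq.mp fun n => ?_
  rw [addOrderOf_dvd_iff_nsmul_eq_zero, ← natCast_zsmul, hf.zsmul_mk_eq_zero_iff S hz]
  constructor
  · rintro ⟨m, hm⟩
    have h₀ : (n : ℤ) * coprimePart S g o₀ = m * (univ \ S).gcd g * coprimePart S g o₀ := by
      rw [hm o₀ ho₀, mul_assoc, gcd_mul_coprimePart S g ho₀]
    refine Int.natCast_dvd_natCast.mp ⟨m, ?_⟩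
    rw [mul_right_cancel₀ (Int.natCast_ne_zero.mpr hz₀) h₀, mul_comm]
  · rintro ⟨q, rfl⟩
    exact ⟨q, fun o ho => by rw [← gcd_mul_coprimePart S g ho]; push_cast; ring⟩

lemma torsion_eq_span_mk (hf : RelationsSpannedBy f g) (hk : (univ \ S).gcd g ≠ 0)
    {z : span ℤ (Set.range f)} (hz : (z : M) = ∑ o, (coprimePart S g o : ℤ) • f o) :
    torsion ℤ (span ℤ (Set.range f) ⧸ (span ℤ (f '' S)).comap (span ℤ (Set.range f)).subtype) =
      span ℤ {Submodule.Quotient.mk z} := by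
  refine le_antisymm (fun x hx => ?_) ?_
  · obtain ⟨y, rfl⟩ := Submodule.Quotient.mk_surjective _ x
    obtain ⟨⟨n, hn⟩, hny⟩ := (mem_torsion_iff _).mp hx
    obtain ⟨u, hu⟩ := (mem_span_range_iff_exists_fun ℤ).mp y.2
    obtain ⟨m, hm⟩ := (hf.zsmul_mk_eq_zero_iff S hu.symm n).mp hny
    have hnu : ∀ o ∉ S, n * u o = m * (univ \ S).gcd g * coprimePart S g o := fun o ho => by
      rw [hm o ho, mul_assoc, gcd_mul_coprimePart S g ho]
    obtain ⟨q, hq⟩ := dvd_of_forall_dvd_mul_of_gcd_eq_one (gcd_coprimePart hk) fun o ho =>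
      ⟨u o, (hnu o (by simpa using ho)).symm⟩
    refine mem_span_singleton.mpr ⟨q, ?_⟩
    rw [← Submodule.Quotient.mk_smul, ← sub_eq_zero, ← Submodule.Quotient.mk_sub,
      hf.mk_eq_zero_iff S (u := fun o => q * coprimePart S g o - u o)
        (by simp only [AddSubgroupClass.coe_sub, Submodule.coe_smul, hz, ← hu, sub_smul,
          mul_smul, smul_sum, sum_sub_distrib])]
    refine ⟨0, fun o ho => ?_⟩
    have hnuo := hnu o ho
    rw [hq, mul_assoc] at hnuo
    rw [mul_left_cancel₀ (nonZeroDivisors.ne_zero hn) hnuo]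
    ring
  · rw [span_le, Set.singleton_subset_iff, SetLike.mem_coe, mem_torsion_iff]
    refine ⟨⟨_, mem_nonZeroDivisors_of_ne_zero (Nat.cast_ne_zero.mpr hk)⟩, ?_⟩
    rw [Submonoid.smul_def, natCast_zsmul, ← hf.addOrderOf_mk hk hz]
    exact addOrderOf_nsmul_eq_zero _

lemma gcd_zsmul_sum_coprimePart (hf : RelationsSpannedBy f g) :
    (↑((univ \ S).gcd g) : ℤ) • ∑ o, (coprimePart S g o : ℤ) • f o =
      -∑ o ∈ S, (g o : ℤ) • f o := by
  have hcoeff (o : κ) :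
      (↑((univ \ S).gcd g) : ℤ) * coprimePart S g o + (if o ∈ S then (g o : ℤ) else 0) = g o := by
    by_cases ho : o ∈ S
    · simp [ho, coprimePart_of_mem S g ho]
    · simp [ho, gcd_mul_coprimePart S g ho]
  refine eq_neg_of_add_eq_zero_left ?_
  calc (↑((univ \ S).gcd g) : ℤ) • ∑ o, (coprimePart S g o : ℤ) • f o + ∑ o ∈ S, (g o : ℤ) • f o
      = ∑ o, ((↑((univ \ S).gcd g) : ℤ) * coprimePart S g o +
          (if o ∈ S then (g o : ℤ) else 0)) • f o := by
        simp only [add_smul, ite_smul, zero_smul, sum_add_distrib, sum_ite_mem, univ_inter,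
          smul_sum, mul_smul]
    _ = 0 := by simp only [hcoeff, hf.sum_smul_eq_zero]

lemma sum_coprimePart_smul_eq_neg_inv_smul [Module ℝ M] (hf : RelationsSpannedBy f g)
    (hk : (univ \ S).gcd g ≠ 0) :
    ∑ o, (coprimePart S g o : ℤ) • f o =
      -((↑((univ \ S).gcd g) : ℝ)⁻¹) • ∑ o ∈ S, (g o : ℝ) • f o := by
  have h := hf.gcd_zsmul_sum_coprimePart (S := S)
  simp only [← Int.cast_smul_eq_zsmul ℝ, Int.cast_natCast] at h ⊢
  rw [neg_smul, ← smul_neg, ← h, inv_smul_smul₀ (Nat.cast_ne_zero.mpr hk)]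

end RelationsSpannedBy

variable {ι : Type*} [Fintype ι] {f : Option ι → M} {g : ι → ℕ}

lemma relationsSpannedBy_optionElim (hli : LinearIndependent ℤ (f ∘ some))
    (hnone : f none = -∑ i, (g i : ℤ) • f (some i)) :
    RelationsSpannedBy f (fun o => Option.elim o 1 g) := by
  intro c
  have hsum : ∑ o, c o • f o = ∑ i, (c (some i) - c none * g i) • f (some i) := by
    simp only [Fintype.sum_option, hnone, smul_neg, smul_sum, sub_smul, mul_smul, sum_sub_distrib]
    abel
  rw [hsum]
  constructor
  · intro h
    refine ⟨c none, fun o => ?_⟩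
    cases o with
    | none => simp
    | some i => simpa [sub_eq_zero] using Fintype.linearIndependent_iff.mp hli _ h i
  · rintro ⟨m, hm⟩
    simp [hm]

lemma span_range_optionElim (hnone : f none = -∑ i, (g i : ℤ) • f (some i)) :
    span ℤ (Set.range f) = span ℤ (Set.range (f ∘ some)) := by
  rw [Option.range_eq, span_insert_eq_span]
  rw [hnone]
  exact neg_mem (sum_mem fun i _ => smul_mem _ _ (subset_span ⟨i, rfl⟩))

end Relations

section Coroot

variable [NormedAddCommGroup V] [InnerProductSpace ℝ V]

lemma coroot_neg (x : V) : coroot (-x) = -coroot x := by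
  simp [coroot]

lemma LinearIndependent.coroot {ι : Type*} {a : ι → V} (ha : LinearIndependent ℝ a) :
    LinearIndependent ℝ fun i => coroot (a i) := by
  have h0 (i : ι) : (2 / ⟪a i, a i⟫ : ℝ) ≠ 0 :=
    div_ne_zero two_ne_zero (inner_self_ne_zero.mpr (ha.ne_zero i))
  convert ha.units_smul fun i => Units.mk0 _ (h0 i)
  rfl

end Coroot

end

theorem torsion_corootLattice_quotient_general {ι : Type*} [Fintype ι] [DecidableEq ι]
    [NormedAddCommGroup V] [InnerProductSpace ℝ V]
    (a : ι → V)
    (hind : LinearIndependent ℝ a)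
    (d : V)
    (g : ι → ℕ) (hgpos : ∀ i, 0 < g i)
    (hrel : coroot d = ∑ i, (g i : ℝ) • coroot (a i))
    (Itil : Finset (Option ι)) (hproper : Itil ≠ Finset.univ)
    (Q : Submodule ℤ V) (hQ : Q = Submodule.span ℤ (Set.range fun i => coroot (a i)))
    (N : Submodule ℤ ↥Q)
    (hN : N = (Submodule.span ℤ
        ((fun o : Option ι => coroot (Option.elim o (-d) a)) '' (Itil : Set (Option ι)))).comap
      Q.subtype)
    (k : ℕ) (hk : k = (Finset.univ \ Itil).gcd (fun o => Option.elim o 1 g))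
    (ζ : V) (hζ : ζ = -((k : ℝ)⁻¹) •
      ∑ o ∈ Itil, ((Option.elim o 1 g : ℕ) : ℝ) • coroot (Option.elim o (-d) a)) :
    ∃ z : ↥Q, (z : V) = ζ ∧
      addOrderOf (Submodule.Quotient.mk z : ↥Q ⧸ N) = k ∧
      Submodule.torsion ℤ (↥Q ⧸ N) =
        Submodule.span ℤ {(Submodule.Quotient.mk z : ↥Q ⧸ N)} := by
  set f : Option ι → V := fun o => coroot (Option.elim o (-d) a)
  have hnone : f none = -∑ i, (g i : ℤ) • f (some i) := by
    simp [f, coroot_neg, hrel, Nat.cast_smul_eq_nsmul]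
  have hf : RelationsSpannedBy f fun o => Option.elim o 1 g :=
    relationsSpannedBy_optionElim ((hind.coroot).restrict_scalars' ℤ) hnone
  obtain rfl : Q = Submodule.span ℤ (Set.range f) := hQ.trans (span_range_optionElim hnone).symm
  subst hN hk hζ
  have hk0 : (Finset.univ \ Itil).gcd (fun o => Option.elim o 1 g) ≠ 0 := by
    obtain ⟨o, ho⟩ : (Finset.univ \ Itil).Nonempty :=
      Finset.sdiff_nonempty.mpr fun h => hproper (Finset.univ_subset_iff.mp h)
    refine mt Finset.gcd_eq_zero_iff.mp fun h => ?_
    cases o with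
    | none => exact one_ne_zero (h none ho)
    | some i => exact (hgpos i).ne' (h (some i) ho)
  refine ⟨⟨∑ o, (coprimePart Itil _ o : ℤ) • f o, ?_⟩, hf.sum_coprimePart_smul_eq_neg_inv_smul hk0,
    hf.addOrderOf_mk hk0 rfl, hf.torsion_eq_span_mk hk0 rfl⟩
  exact Submodule.sum_mem _ fun o _ => Submodule.smul_mem _ _ (Submodule.subset_span ⟨o, rfl⟩)

/-- Let `Φ` be an irreducible root system with extended simple roots `Δ̃` (modeled by
`Option ι`: `some i ↦ a i` and `none ↦ −d` the extended node) and coroot integers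
`g_a` (with value `1` at the extended node) satisfying `∑_{a∈Δ̃} g_a a^∨ = 0`. Let
`Ĩ ⊊ Δ̃`, let `Q^∨` be the full coroot lattice (spanned over `ℤ` by the simple
coroots) and `Q^∨_Ĩ` the sublattice spanned by `{a^∨ : a ∈ Ĩ}`. Then the torsion
subgroup of `Q^∨/Q^∨_Ĩ` is cyclic of order `k = gcd{g_a : a ∉ Ĩ}`, generated by the
class of `ζ = −(1/k) ∑_{a∈Ĩ} g_a a^∨`. -/
theorem torsion_corootLattice_quotient {ι : Type*} [Fintype ι] [DecidableEq ι]
    [NormedAddCommGroup V] [InnerProductSpace ℝ V]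
    (Φ : Set V) (hΦ : IsRootSystem Φ) (hirr : IsIrreducibleRS Φ) (hred : IsReducedRS Φ)
    (a : ι → V) (haΦ : ∀ i, a i ∈ Φ) (hinj : Function.Injective a)
    (hind : LinearIndependent ℝ a)
    (hbase : ∀ b ∈ Φ, (∃ c : ι → ℕ, b = ∑ i, (c i : ℝ) • a i) ∨
      (∃ c : ι → ℕ, b = -∑ i, (c i : ℝ) • a i))
    (d : V) (hd : d ∈ Φ)
    (hhigh : ∀ b ∈ Φ, ∃ c : ι → ℕ, d - b = ∑ i, (c i : ℝ) • a i)
    (g : ι → ℕ) (hgpos : ∀ i, 0 < g i)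
    (hrel : coroot d = ∑ i, (g i : ℝ) • coroot (a i))
    (Itil : Finset (Option ι)) (hproper : Itil ≠ Finset.univ)
    (Q : Submodule ℤ V) (hQ : Q = Submodule.span ℤ (Set.range fun i => coroot (a i)))
    (N : Submodule ℤ ↥Q)
    (hN : N = (Submodule.span ℤ
        ((fun o : Option ι => coroot (Option.elim o (-d) a)) '' (Itil : Set (Option ι)))).comap
      Q.subtype)
    (k : ℕ) (hk : k = (Finset.univ \ Itil).gcd (fun o => Option.elim o 1 g))
    (ζ : V) (hζ : ζ = -((k : ℝ)⁻¹) •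
      ∑ o ∈ Itil, ((Option.elim o 1 g : ℕ) : ℝ) • coroot (Option.elim o (-d) a)) :
    ∃ z : ↥Q, (z : V) = ζ ∧
      addOrderOf (Submodule.Quotient.mk z : ↥Q ⧸ N) = k ∧
      Submodule.torsion ℤ (↥Q ⧸ N) =
        Submodule.span ℤ {(Submodule.Quotient.mk z : ↥Q ⧸ N)} :=
  torsion_corootLattice_quotient_general a hind d g hgpos hrel Itil hproper Q hQ N hN k hk ζ hζ
end

section
/- Let T = 𝔱/Λ be a torus (𝔱 a finite-dimensional real vector space with inner product, Λ a full lattice), and σ a linear automorphism of finite order of 𝔱 preserving Λ and the inner product. Then the component group π₀(T^σ) of the fixed subgroup T^σ is naturally isomorphic to the torsion subgroup of the coinvariants Λ_σ = Λ/(Id − σ)Λ. In particular, if σ permutes a Z-basis of Λ, then T^σ is connected. -/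
open scoped RealInnerProductSpace

/-- The fixed-point subgroup of an additive group endomorphism. -/
def fixedAddSubgroup {T : Type*} [AddGroup T] (f : T →+ T) : AddSubgroup T where
  carrier := {t | f t = t}
  zero_mem' := by simp
  add_mem' := by
    intro x y hx hy
    simp only [Set.mem_setOf_eq, map_add] at *
    rw [hx, hy]
  neg_mem' := by
    intro x hx
    simp only [Set.mem_setOf_eq, map_neg] at *
    rw [hx]

/-!
A class `[x] ∈ T^σ` is exactly one with `x - σ x ∈ Λ`, and `[x] ↦ [x - σ x] ∈ Λ_σ` is the
connecting homomorphism of `0 → Λ → 𝔱 → T → 0`. Its kernel is the image of the subspace `𝔱^σ`,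
hence connected, and it is open because `Λ` is discrete, so it is the identity component of
`T^σ`. Its image is the torsion of `Λ_σ`: if `σ^m = 1` then `m = (1 - σ) P + ∑_{i<m} σ^i` for a
polynomial `P` in `σ`, which kills `m (x - σ x)` in `Λ_σ`; conversely `n w = l - σ l` with
`l ∈ Λ` exhibits `w` as `y - σ y` for `y = l / n`. If `σ` permutes a basis of `Λ`, the
fractional part of `x` in that basis is a `σ`-fixed lift of `[x] ∈ T^σ`.
-/

open Finset in
theorem natCast_mul_one_sub_of_pow_eq_one {R : Type*} [Ring R] {x : R} {m : ℕ}
    (h : x ^ m = 1) :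
    (m : R) * (1 - x) = (1 - x) * ((∑ i ∈ range m, ∑ j ∈ range i, x ^ j) * (1 - x)) := by
  have hm : (m : R) = (1 - x) * ∑ i ∈ range m, ∑ j ∈ range i, x ^ j + ∑ i ∈ range m, x ^ i := by
    rw [mul_sum, ← sum_add_distrib]
    simp only [mul_neg_geom_sum, sub_add_cancel, sum_const, card_range, nsmul_one]
  rw [hm, add_mul, geom_sum_mul_neg, h, sub_self, add_zero, mul_assoc]

namespace FixedTorus

variable {V : Type*} [AddCommGroup V] [Module ℝ V] (f : Module.End ℝ V) (Λ : AddSubgroup V)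
  {σT : V ⧸ Λ →+ V ⧸ Λ}

theorem mk_mem_fixedAddSubgroup_iff (hσT : ∀ x : V, σT x = (f x : V ⧸ Λ)) (x : V) :
    (x : V ⧸ Λ) ∈ fixedAddSubgroup σT ↔ x - f x ∈ Λ := by
  change σT x = x ↔ _
  rw [hσT, QuotientAddGroup.eq, neg_add_eq_sub]

def coinvariantsKer : AddSubgroup Λ := (Λ.map (1 - f).toAddMonoidHom).addSubgroupOf Λ

theorem mem_coinvariantsKer {z : Λ} : z ∈ coinvariantsKer f Λ ↔ ∃ x ∈ Λ, x - f x = z := by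
  simp [coinvariantsKer, AddSubgroup.mem_addSubgroupOf]

theorem pow_apply_mem (hfΛ : ∀ x ∈ Λ, f x ∈ Λ) (n : ℕ) {x : V} (hx : x ∈ Λ) : (f ^ n) x ∈ Λ := by
  induction n with
  | zero => simpa
  | succ n ih => rw [pow_succ', Module.End.mul_apply]; exact hfΛ _ ih

variable (hσT : ∀ x : V, σT x = (f x : V ⧸ Λ))

def toFixedAddSubgroup : Λ.comap (1 - f).toAddMonoidHom →+ fixedAddSubgroup σT :=
  ((QuotientAddGroup.mk' Λ).comp (AddSubgroup.subtype _)).codRestrict _ fun x =>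
    (mk_mem_fixedAddSubgroup_iff f Λ hσT x).2 x.2

theorem toFixedAddSubgroup_surjective : Function.Surjective (toFixedAddSubgroup f Λ hσT) := by
  rintro ⟨t, ht⟩
  obtain ⟨x, rfl⟩ := QuotientAddGroup.mk_surjective t
  exact ⟨⟨x, by simpa [mk_mem_fixedAddSubgroup_iff f Λ hσT] using ht⟩, rfl⟩

def subToCoinvariants : Λ.comap (1 - f).toAddMonoidHom →+ Λ ⧸ coinvariantsKer f Λ :=
  (QuotientAddGroup.mk' _).comp
    (((1 - f).toAddMonoidHom.comp (AddSubgroup.subtype _)).codRestrict Λ fun x => x.2)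

/-- The connecting homomorphism `H⁰(⟨f⟩, V ⧸ Λ) → H¹(⟨f⟩, Λ)` of `0 → Λ → V → V ⧸ Λ → 0`. -/
noncomputable def connectingHom : fixedAddSubgroup σT →+ Λ ⧸ coinvariantsKer f Λ :=
  (toFixedAddSubgroup f Λ hσT).liftOfSurjective (toFixedAddSubgroup_surjective f Λ hσT)
    ⟨subToCoinvariants f Λ, fun x hx => by
      have hxΛ : (x : V) ∈ Λ := (QuotientAddGroup.eq_zero_iff _).1 (congrArg Subtype.val hx)
      exact (QuotientAddGroup.eq_zero_iff _).2 ((mem_coinvariantsKer f Λ).2 ⟨x, hxΛ, rfl⟩)⟩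

theorem connectingHom_toFixedAddSubgroup (x : Λ.comap (1 - f).toAddMonoidHom) :
    connectingHom f Λ hσT (toFixedAddSubgroup f Λ hσT x) = subToCoinvariants f Λ x :=
  AddMonoidHom.liftOfRightInverse_comp_apply _ _ _ _ x

theorem connectingHom_mk {x : V} (hx : x - f x ∈ Λ) :
    connectingHom f Λ hσT ⟨x, (mk_mem_fixedAddSubgroup_iff f Λ hσT x).2 hx⟩ =
      ((⟨x - f x, hx⟩ : Λ) : Λ ⧸ coinvariantsKer f Λ) :=
  connectingHom_toFixedAddSubgroup f Λ hσT ⟨x, hx⟩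

theorem mem_ker_connectingHom_iff (t : fixedAddSubgroup σT) :
    t ∈ (connectingHom f Λ hσT).ker ↔ ∃ v, f v = v ∧ (v : V ⧸ Λ) = t := by
  obtain ⟨⟨x, hx⟩, rfl⟩ := toFixedAddSubgroup_surjective f Λ hσT t
  replace hx : x - f x ∈ Λ := hx
  change connectingHom f Λ hσT ⟨x, _⟩ = 0 ↔ ∃ v, f v = v ∧ (v : V ⧸ Λ) = x
  rw [connectingHom_mk f Λ hσT hx, QuotientAddGroup.eq_zero_iff, mem_coinvariantsKer]
  constructor
  · rintro ⟨l, hl, hlx⟩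
    refine ⟨x - l, ?_, QuotientAddGroup.eq.2 (by simpa using hl)⟩
    rw [map_sub, sub_eq_sub_iff_sub_eq_sub, ← neg_inj, neg_sub, neg_sub]
    exact hlx.symm
  · rintro ⟨v, hv, hvx⟩
    refine ⟨x - v, by simpa [neg_add_eq_sub] using QuotientAddGroup.eq.1 hvx, ?_⟩
    simp [hv]

theorem torsion_le_range_connectingHom :
    AddCommGroup.torsion (Λ ⧸ coinvariantsKer f Λ) ≤ (connectingHom f Λ hσT).range := by
  intro z hz
  obtain ⟨w, rfl⟩ := QuotientAddGroup.mk_surjective z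
  obtain ⟨n, hn, hnw⟩ := isOfFinAddOrder_iff_nsmul_eq_zero.1 hz
  rw [← QuotientAddGroup.mk_nsmul, QuotientAddGroup.eq_zero_iff, mem_coinvariantsKer] at hnw
  obtain ⟨l, hl, hlw⟩ := hnw
  have hx : (n : ℝ)⁻¹ • l - f ((n : ℝ)⁻¹ • l) = w := by
    rw [map_inv_natCast_smul f ℝ ℝ, ← smul_sub, hlw, AddSubgroup.coe_nsmul,
      ← Nat.cast_smul_eq_nsmul ℝ, inv_smul_smul₀ (by exact_mod_cast hn.ne')]
  refine ⟨_, (connectingHom_mk f Λ hσT (hx ▸ w.2)).trans ?_⟩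
  congr 1
  exact Subtype.ext hx

theorem range_connectingHom_le_torsion (hfΛ : ∀ x ∈ Λ, f x ∈ Λ) {m : ℕ} (hm : 0 < m)
    (hfm : f ^ m = 1) :
    (connectingHom f Λ hσT).range ≤ AddCommGroup.torsion (Λ ⧸ coinvariantsKer f Λ) := by
  rintro _ ⟨t, rfl⟩
  obtain ⟨⟨x, hx⟩, rfl⟩ := toFixedAddSubgroup_surjective f Λ hσT t
  replace hx : x - f x ∈ Λ := hx
  refine isOfFinAddOrder_iff_nsmul_eq_zero.2 ⟨m, hm, ?_⟩
  change m • connectingHom f Λ hσT ⟨x, _⟩ = 0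
  rw [connectingHom_mk f Λ hσT hx, ← QuotientAddGroup.mk_nsmul, QuotientAddGroup.eq_zero_iff,
    mem_coinvariantsKer]
  have h := LinearMap.congr_fun (natCast_mul_one_sub_of_pow_eq_one hfm) x
  simp only [Module.End.mul_apply, LinearMap.sub_apply, Module.End.one_apply,
    Module.End.natCast_apply] at h
  refine ⟨_, ?_, h.symm⟩
  simp_rw [LinearMap.sum_apply]
  exact sum_mem fun i _ => sum_mem fun j _ => pow_apply_mem f Λ hfΛ j hx

section Topology

variable [TopologicalSpace V] [IsTopologicalAddGroup V]

theorem ker_connectingHom_le [ContinuousSMul ℝ V] :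
    (connectingHom f Λ hσT).ker ≤ AddSubgroup.connectedComponentOfZero (fixedAddSubgroup σT) := by
  intro t ht
  obtain ⟨v, hv, hvt⟩ := (mem_ker_connectingHom_iff f Λ hσT t).1 ht
  let θ : {v : V // f v = v} → fixedAddSubgroup σT := fun v =>
    ⟨v.1, (mk_mem_fixedAddSubgroup_iff f Λ hσT v).2 (by simp [v.2])⟩
  have : PreconnectedSpace {v : V // f v = v} :=
    Subtype.preconnectedSpace (f.eqLocus LinearMap.id).convex.isPreconnected
  have hθ : Continuous θ :=
    (QuotientAddGroup.continuous_mk.comp continuous_subtype_val).subtype_mk _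
  exact (isPreconnected_range hθ).subset_connectedComponent ⟨⟨0, map_zero f⟩, rfl⟩
    ⟨⟨v, hv⟩, Subtype.ext hvt⟩

theorem isOpen_ker_connectingHom [DiscreteTopology Λ] (hf : Continuous f) :
    IsOpen ((connectingHom f Λ hσT).ker : Set (fixedAddSubgroup σT)) := by
  obtain ⟨U, hU, hUΛ⟩ := isOpen_induced_iff.1 (isOpen_discrete ({0} : Set Λ))
  have h0U : (0 : V) ∈ U := by
    simpa using (Set.ext_iff.1 hUΛ 0).2 rfl
  set W := (fun x => x - f x) ⁻¹' U
  have hW : IsOpen W := hU.preimage (continuous_id.sub hf)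
  refine AddSubgroup.isOpen_of_mem_nhds _ (g := 0) ?_
  refine mem_nhds_iff.2 ⟨Subtype.val ⁻¹' (((↑) : V → V ⧸ Λ) '' W), ?_,
    (QuotientAddGroup.isOpenMap_coe W hW).preimage continuous_subtype_val,
    ⟨0, by simpa [W] using h0U, rfl⟩⟩
  rintro t ⟨x, hxW, hxt⟩
  have hxΛ : x - f x ∈ Λ := (mk_mem_fixedAddSubgroup_iff f Λ hσT x).1 (hxt ▸ t.2)
  have hx0 : x - f x = 0 := by
    simpa using (Set.ext_iff.1 hUΛ ⟨_, hxΛ⟩).1 hxW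
  exact (mem_ker_connectingHom_iff f Λ hσT t).2 ⟨x, (sub_eq_zero.1 hx0).symm, hxt⟩

theorem ker_connectingHom_eq [ContinuousSMul ℝ V] [DiscreteTopology Λ] (hf : Continuous f) :
    (connectingHom f Λ hσT).ker = AddSubgroup.connectedComponentOfZero (fixedAddSubgroup σT) := by
  have hopen := isOpen_ker_connectingHom f Λ hσT hf
  refine le_antisymm (ker_connectingHom_le f Λ hσT) fun t ht => ?_
  exact IsClopen.connectedComponent_subset ⟨AddSubgroup.isClosed_of_isOpen _ hopen, hopen⟩
    (zero_mem _) ht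

noncomputable def fixedComponentsEquivTorsion [ContinuousSMul ℝ V] [DiscreteTopology Λ]
    (hf : Continuous f) (hfΛ : ∀ x ∈ Λ, f x ∈ Λ) {m : ℕ} (hm : 0 < m) (hfm : f ^ m = 1) :
    (fixedAddSubgroup σT ⧸ AddSubgroup.connectedComponentOfZero (fixedAddSubgroup σT)) ≃+
      AddCommGroup.torsion (Λ ⧸ coinvariantsKer f Λ) :=
  (QuotientAddGroup.quotientAddEquivOfEq (ker_connectingHom_eq f Λ hσT hf).symm).trans <|
    (QuotientAddGroup.quotientKerEquivRange _).trans <| AddEquiv.addSubgroupCongr <|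
      le_antisymm (range_connectingHom_le_torsion f Λ hσT hfΛ hm hfm)
        (torsion_le_range_connectingHom f Λ hσT)

theorem isConnected_fixedAddSubgroup [ContinuousSMul ℝ V] (hσT : ∀ x : V, σT x = (f x : V ⧸ Λ))
    (hlift : ∀ x, x - f x ∈ Λ → ∃ v, f v = v ∧ (v : V ⧸ Λ) = x) :
    IsConnected (fixedAddSubgroup σT : Set (V ⧸ Λ)) := by
  rw [isConnected_iff_connectedSpace, connectedSpace_iff_connectedComponent]
  refine ⟨0, Set.eq_univ_of_forall fun t => ker_connectingHom_le f Λ hσT ?_⟩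
  obtain ⟨⟨x, hx⟩, rfl⟩ := toFixedAddSubgroup_surjective f Λ hσT t
  exact (mem_ker_connectingHom_iff f Λ hσT _).2 (hlift x hx)

end Topology

end FixedTorus

theorem Module.Basis.repr_apply_eq_of_perm {R M ι : Type*} [Semiring R] [AddCommMonoid M]
    [Module R M] (b : Module.Basis ι R M) {f : M →ₗ[R] M} {e : ι ≃ ι}
    (hf : ∀ i, f (b i) = b (e i)) (y : M) (i : ι) : b.repr (f y) i = b.repr y (e.symm i) := by
  classical
  have h : Finsupp.lapply i ∘ₗ b.repr.toLinearMap ∘ₗ f =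
      Finsupp.lapply (e.symm i) ∘ₗ b.repr.toLinearMap :=
    b.ext fun j => by
      simp only [LinearMap.comp_apply, hf, LinearEquiv.coe_coe, Module.Basis.repr_self,
        Finsupp.lapply_apply, Finsupp.single_apply, Equiv.eq_symm_apply]
  exact LinearMap.congr_fun h y

theorem Module.Basis.exists_equiv_of_forall_exists {R M ι : Type*} [Semiring R] [Nontrivial R]
    [AddCommMonoid M] [Module R M] [Finite ι] (b : Module.Basis ι R M) {f : M → M}
    (hf : Function.Injective f) (h : ∀ i, ∃ j, f (b i) = b j) :
    ∃ e : ι ≃ ι, ∀ i, f (b i) = b (e i) := by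
  choose g hg using h
  have hg_inj : Function.Injective g := fun i i' hii' =>
    b.injective (hf (by rw [hg, hg, hii']))
  exact ⟨Equiv.ofBijective g (Finite.injective_iff_bijective.1 hg_inj), hg⟩

theorem ZSpan.apply_fract_eq_fract_of_perm {E ι : Type*} [NormedAddCommGroup E]
    [NormedSpace ℝ E] [Fintype ι] (b : Module.Basis ι ℝ E) {f : E →ₗ[ℝ] E} {e : ι ≃ ι}
    (hf : ∀ i, f (b i) = b (e i)) {x : E} (hx : x - f x ∈ Submodule.span ℤ (Set.range b)) :
    f (fract b x) = fract b x := by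
  refine b.ext_elem fun i => ?_
  obtain ⟨z, hz⟩ := (b.mem_span_iff_repr_mem ℤ _).1 hx i
  rw [b.repr_apply_eq_of_perm hf, repr_fract_apply, repr_fract_apply, Int.fract_eq_fract]
  refine ⟨-z, ?_⟩
  simp only [map_sub, Finsupp.coe_sub, Pi.sub_apply, b.repr_apply_eq_of_perm hf, eq_intCast] at hz
  push_cast
  linarith

theorem pi0_fixed_torus_general {V : Type*} [NormedAddCommGroup V] [InnerProductSpace ℝ V]
    [FiniteDimensional ℝ V] {ι : Type*} [Fintype ι] (bV : Module.Basis ι ℝ V)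
    (Λ : AddSubgroup V) (hΛ : Λ = AddSubgroup.closure (Set.range bV))
    (σ : V ≃ₗ[ℝ] V) (hord : ∃ m : ℕ, 0 < m ∧ σ ^ m = 1)
    (hσΛ : ∀ x ∈ Λ, σ x ∈ Λ)
    (σT : (V ⧸ Λ) →+ (V ⧸ Λ))
    (hσT : ∀ x : V, σT (QuotientAddGroup.mk x) = QuotientAddGroup.mk (σ x))
    (NΛ : AddSubgroup ↥Λ)
    (hNΛ : (NΛ : Set ↥Λ) = {z : ↥Λ | ∃ x : ↥Λ, (z : V) = (x : V) - σ (x : V)}) :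
    Nonempty
      ((↥(fixedAddSubgroup σT) ⧸
          AddSubgroup.connectedComponentOfZero ↥(fixedAddSubgroup σT)) ≃+
        ↥(AddCommGroup.torsion (↥Λ ⧸ NΛ))) ∧
    ((∀ i, ∃ j, σ (bV i) = bV j) →
      IsConnected ((fixedAddSubgroup σT : Set (V ⧸ Λ)))) := by
  obtain ⟨m, hm, hσm⟩ := hord
  have hΛ_span : Λ = (Submodule.span ℤ (Set.range bV)).toAddSubgroup := by
    rw [hΛ, Submodule.span_int_eq_addSubgroupClosure]
  have : DiscreteTopology Λ := hΛ_span ▸ inferInstance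
  have hN : NΛ = FixedTorus.coinvariantsKer σ.toLinearMap Λ := by
    refine SetLike.coe_injective (hNΛ.trans (Set.ext fun z => ?_))
    simp [FixedTorus.mem_coinvariantsKer, eq_comm]
  subst hN
  have hσm' : σ.toLinearMap ^ m = 1 := by
    rw [← LinearEquiv.automorphismGroup.toLinearMapMonoidHom_apply, ← map_pow, hσm, map_one]
  refine ⟨⟨FixedTorus.fixedComponentsEquivTorsion _ Λ hσT
    σ.toLinearMap.continuous_of_finiteDimensional hσΛ hm hσm'⟩, fun hperm => ?_⟩
  obtain ⟨e, he⟩ := bV.exists_equiv_of_forall_exists σ.injective hperm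
  refine FixedTorus.isConnected_fixedAddSubgroup _ Λ hσT fun x hx => ⟨ZSpan.fract bV x, ?_, ?_⟩
  · exact ZSpan.apply_fract_eq_fract_of_perm bV (f := σ.toLinearMap) he
      (by simpa [hΛ_span] using hx)
  · rw [QuotientAddGroup.eq, ZSpan.fract_apply, neg_sub, sub_add_cancel, hΛ_span]
    exact (ZSpan.floor bV x).2

/-- Let `T = 𝔱/Λ` be a torus (`Λ` a full lattice, generated by an `ℝ`-basis `bV` of `𝔱`)
and `σ` a finite-order linear automorphism of `𝔱` preserving `Λ` and the inner product,
inducing `σT` on `T`. Then the component group `π₀(T^σ)` of the fixed subgroup `T^σ`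
(realized as the quotient of `T^σ` by the connected component of `0`) is naturally
isomorphic to the torsion subgroup of the coinvariants `Λ_σ = Λ/(Id − σ)Λ`. In
particular, if `σ` permutes a `ℤ`-basis of `Λ`, then `T^σ` is connected. -/
theorem pi0_fixed_torus {V : Type*} [NormedAddCommGroup V] [InnerProductSpace ℝ V]
    [FiniteDimensional ℝ V] {ι : Type*} [Fintype ι] (bV : Module.Basis ι ℝ V)
    (Λ : AddSubgroup V) (hΛ : Λ = AddSubgroup.closure (Set.range bV))
    (σ : V ≃ₗ[ℝ] V) (hord : ∃ m : ℕ, 0 < m ∧ σ ^ m = 1)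
    (hinner : ∀ x y : V, ⟪σ x, σ y⟫ = ⟪x, y⟫)
    (hσΛ : ∀ x ∈ Λ, σ x ∈ Λ)
    (σT : (V ⧸ Λ) →+ (V ⧸ Λ))
    (hσT : ∀ x : V, σT (QuotientAddGroup.mk x) = QuotientAddGroup.mk (σ x))
    (NΛ : AddSubgroup ↥Λ)
    (hNΛ : (NΛ : Set ↥Λ) = {z : ↥Λ | ∃ x : ↥Λ, (z : V) = (x : V) - σ (x : V)}) :
    Nonempty
      ((↥(fixedAddSubgroup σT) ⧸
          AddSubgroup.connectedComponentOfZero ↥(fixedAddSubgroup σT)) ≃+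
        ↥(AddCommGroup.torsion (↥Λ ⧸ NΛ))) ∧
    ((∀ i, ∃ j, σ (bV i) = bV j) →
      IsConnected ((fixedAddSubgroup σT : Set (V ⧸ Λ)))) :=
  pi0_fixed_torus_general bV Λ hΛ σ hord hσΛ σT hσT NΛ hNΛ
end

section
/- Let T = 𝔱/Λ be a torus with an automorphism σ of finite order preserving Λ. Then the coinvariant torus T_σ = T/(Id − σ)(T) is connected and equals 𝔱^σ/π(Λ), where π : 𝔱 → 𝔱^σ is orthogonal projection with respect to a σ-invariant inner product. Moreover, orthogonal projection induces an isomorphism Λ_σ/Tor(Λ_σ) ≅ π(Λ). -/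
open scoped RealInnerProductSpace
open Finset

/-! Since `σ` preserves the inner product, `Id - σ` maps `𝔱` onto the orthogonal complement of
`𝔱^σ = ker (Id - σ)`, which is the kernel of `π`. Hence `T_σ` and `𝔱^σ/π(Λ)` are both the quotient
of `𝔱` by `Λ + (𝔱^σ)ᗮ`, and `T_σ`, a quotient of `𝔱`, is connected.

On the lattice, `π` kills `(Id - σ)Λ`. Conversely, if `σ^m = 1` then `∑_{i<m} σ^i = m π`, and
`m - ∑_{i<m} σ^i = (Id - σ) ∑_{i<m} ∑_{j<i} σ^j`, so `m λ ∈ (Id - σ)Λ` whenever `λ ∈ Λ` and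
`π λ = 0`. As `π(Λ)` is torsion-free, the kernel of `Λ_σ → π(Λ)` is exactly the torsion of `Λ_σ`. -/

theorem natCast_sub_geom_sum_eq_one_sub_mul {R : Type*} [Ring R] (s : R) (m : ℕ) :
    (m : R) - ∑ i ∈ range m, s ^ i = (1 - s) * ∑ i ∈ range m, ∑ j ∈ range i, s ^ j := by
  rw [mul_sum]
  simp only [mul_neg_geom_sum, sum_sub_distrib, sum_const, card_range, nsmul_one]

namespace QuotientAddGroup

variable {A B : Type*} [AddCommGroup A] [AddCommGroup B]

theorem torsion_eq_ker_lift [IsAddTorsionFree B] (N : AddSubgroup A) (p : A →+ B)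
    (hN : N ≤ p.ker) (hker : ∀ a, p a = 0 → ∃ n ≠ 0, n • a ∈ N) :
    AddCommGroup.torsion (A ⧸ N) = (lift N p hN).ker := by
  ext x
  induction x using QuotientAddGroup.induction_on with | H a => ?_
  rw [AddCommGroup.mem_torsion, AddMonoidHom.mem_ker, lift_mk, isOfFinAddOrder_iff_nsmul_eq_zero]
  constructor
  · rintro ⟨n, hn, hna⟩
    refine IsAddTorsionFree.nsmul_right_injective hn.ne' (?_ : n • p a = n • 0)
    rw [nsmul_zero, ← map_nsmul, ← lift_mk (HN := hN), mk_nsmul, hna, map_zero]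
  · intro hpa
    obtain ⟨n, hn, hna⟩ := hker a hpa
    exact ⟨n, Nat.pos_of_ne_zero hn, by rwa [← mk_nsmul, eq_zero_iff]⟩

theorem exists_quotient_torsion_equiv_range [IsAddTorsionFree B] (N : AddSubgroup A)
    (p : A →+ B) (hN : N ≤ p.ker) (hker : ∀ a, p a = 0 → ∃ n ≠ 0, n • a ∈ N) :
    ∃ e : ((A ⧸ N) ⧸ AddCommGroup.torsion (A ⧸ N)) ≃+ p.range,
      ∀ a : A, (e (mk (mk a)) : B) = p a := by
  have hrange := congrArg AddMonoidHom.range (lift_comp_mk' N p hN)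
  rw [AddMonoidHom.range_comp, AddMonoidHom.range_eq_top.mpr (mk'_surjective N),
    ← AddMonoidHom.range_eq_map] at hrange
  exact ⟨(quotientAddEquivOfEq (torsion_eq_ker_lift N p hN hker)).trans
    ((quotientKerEquivRange _).trans (AddEquiv.addSubgroupCongr hrange)), fun a => rfl⟩

theorem ker_mk'_map_comp {G H : Type*} [AddGroup G] [AddCommGroup H] (f : G →+ H)
    (N : AddSubgroup G) : ((mk' (N.map f)).comp f).ker = N ⊔ f.ker := by
  rw [← AddMonoidHom.comap_ker, ker_mk', AddSubgroup.comap_map_eq]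

theorem ker_mk'_comp_mk'_range_id_sub {G : Type*} [AddCommGroup G] (N : AddSubgroup G)
    (f : G →+ G) (fN : G ⧸ N →+ G ⧸ N) (hfN : ∀ x : G, fN x = f x) :
    ((mk' (AddMonoidHom.id _ - fN).range).comp (mk' N)).ker =
      N ⊔ (AddMonoidHom.id G - f).range := by
  have hcomm : (AddMonoidHom.id _ - fN).comp (mk' N) = (mk' N).comp (AddMonoidHom.id G - f) := by
    ext x
    simp [hfN]
  have hrange : (AddMonoidHom.id _ - fN).range = (AddMonoidHom.id G - f).range.map (mk' N) := by
    rw [← AddMonoidHom.range_comp, ← hcomm, AddMonoidHom.range_comp,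
      AddMonoidHom.range_eq_top.mpr (mk'_surjective N), ← AddMonoidHom.range_eq_map]
  rw [← AddMonoidHom.comap_ker, ker_mk', hrange, comap_map_mk']

end QuotientAddGroup

theorem AddMonoidHom.nonempty_addEquiv_of_ker_eq {G H H' : Type*} [AddGroup G] [AddGroup H]
    [AddGroup H'] {φ : G →+ H} {ψ : G →+ H'} (hφ : Function.Surjective φ)
    (hψ : Function.Surjective ψ) (h : φ.ker = ψ.ker) : Nonempty (H ≃+ H') :=
  ⟨(QuotientAddGroup.quotientKerEquivOfSurjective φ hφ).symm.trans
    ((QuotientAddGroup.quotientAddEquivOfEq h).trans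
      (QuotientAddGroup.quotientKerEquivOfSurjective ψ hψ))⟩

section FixedSubspace

variable {V : Type*} [NormedAddCommGroup V] [InnerProductSpace ℝ V] {f : V →ₗ[ℝ] V}
  (hf : ∀ x y, ⟪f x, f y⟫ = ⟪x, y⟫) {K : Submodule ℝ V} (hK : ∀ x, x ∈ K ↔ f x = x)
include hf hK

theorem sub_apply_mem_orthogonal_of_fixed (x : V) : x - f x ∈ Kᗮ := by
  rw [Submodule.mem_orthogonal']
  intro k hk
  rw [inner_sub_left, ← hf x k, (hK k).1 hk, sub_self]

theorem range_id_sub_eq_orthogonal [FiniteDimensional ℝ V] :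
    LinearMap.range (LinearMap.id - f) = Kᗮ := by
  have hker : LinearMap.ker (LinearMap.id - f) = K := by
    ext x
    rw [LinearMap.mem_ker, hK, LinearMap.sub_apply, LinearMap.id_apply, sub_eq_zero, eq_comm]
  apply Submodule.eq_of_le_of_finrank_eq
  · rintro _ ⟨x, rfl⟩
    exact sub_apply_mem_orthogonal_of_fixed hf hK x
  · have := LinearMap.finrank_range_add_finrank_ker (LinearMap.id - f)
    have := K.finrank_add_finrank_orthogonal
    rw [hker] at *
    omega

theorem orthogonalProjectionOnto_apply_of_fixed [K.HasOrthogonalProjection] (x : V) :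
    K.orthogonalProjectionOnto (f x) = K.orthogonalProjectionOnto x := by
  rw [eq_comm, ← sub_eq_zero, ← map_sub]
  exact Submodule.orthogonalProjectionOnto_eq_zero_iff.mpr
    (sub_apply_mem_orthogonal_of_fixed hf hK x)

theorem sum_pow_apply_eq_nsmul_orthogonalProjectionOnto [K.HasOrthogonalProjection] {m : ℕ}
    (hfm : f ^ m = 1) (x : V) :
    ∑ i ∈ range m, (f ^ i) x = m • (K.orthogonalProjectionOnto x : V) := by
  have hfixed : ∑ i ∈ range m, (f ^ i) x ∈ K := by
    rw [hK, eq_comm, ← sub_eq_zero]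
    simpa [sub_mul, hfm] using congrArg (· x) (mul_neg_geom_sum f m)
  have hpow (i : ℕ) : K.orthogonalProjectionOnto ((f ^ i) x) = K.orthogonalProjectionOnto x := by
    induction i with
    | zero => rfl
    | succ i ih =>
      rw [pow_succ', Module.End.mul_apply, orthogonalProjectionOnto_apply_of_fixed hf hK, ih]
  calc ∑ i ∈ range m, (f ^ i) x
      = (K.orthogonalProjectionOnto (∑ i ∈ range m, (f ^ i) x) : V) :=
        congrArg Subtype.val (K.orthogonalProjectionOnto_mem_subspace_eq_self ⟨_, hfixed⟩).symm
    _ = m • (K.orthogonalProjectionOnto x : V) := by simp [hpow]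

theorem exists_mem_nsmul_eq_sub_apply_of_orthogonalProjectionOnto_eq_zero
    [K.HasOrthogonalProjection] {m : ℕ} (hfm : f ^ m = 1) {Λ : AddSubgroup V}
    (hfΛ : ∀ x ∈ Λ, f x ∈ Λ) {x : V} (hx : x ∈ Λ) (hπx : K.orthogonalProjectionOnto x = 0) :
    ∃ y ∈ Λ, m • x = y - f y := by
  refine ⟨∑ i ∈ range m, ∑ j ∈ range i, (f ^ j) x, sum_mem fun i _ => sum_mem fun j _ => ?_, ?_⟩
  · rw [Module.End.coe_pow]
    exact Set.MapsTo.iterate (fun _ h => hfΛ _ h) j hx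
  · have := congrArg (· x) (natCast_sub_geom_sum_eq_one_sub_mul f m)
    simp only [LinearMap.sub_apply, Module.End.natCast_apply, LinearMap.sum_apply,
      Module.End.mul_apply, Module.End.one_apply] at this
    rwa [sum_pow_apply_eq_nsmul_orthogonalProjectionOnto hf hK hfm, hπx, ZeroMemClass.coe_zero,
      smul_zero, sub_zero] at this

theorem nonempty_quotient_range_id_sub_equiv [FiniteDimensional ℝ V] (Λ : AddSubgroup V)
    (fΛ : V ⧸ Λ →+ V ⧸ Λ) (hfΛ : ∀ x : V, fΛ x = f x) :
    Nonempty ((V ⧸ Λ) ⧸ (AddMonoidHom.id _ - fΛ).range ≃+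
      K ⧸ Λ.map (K.orthogonalProjectionOnto : V →ₗ[ℝ] K).toAddMonoidHom) := by
  refine AddMonoidHom.nonempty_addEquiv_of_ker_eq
    (φ := (QuotientAddGroup.mk' _).comp (QuotientAddGroup.mk' Λ))
    (ψ := (QuotientAddGroup.mk' _).comp (K.orthogonalProjectionOnto : V →ₗ[ℝ] K).toAddMonoidHom)
    ((QuotientAddGroup.mk'_surjective _).comp (QuotientAddGroup.mk'_surjective Λ))
    ((QuotientAddGroup.mk'_surjective _).comp
      fun k => ⟨k, K.orthogonalProjectionOnto_mem_subspace_eq_self k⟩) ?_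
  rw [QuotientAddGroup.ker_mk'_comp_mk'_range_id_sub Λ f.toAddMonoidHom fΛ hfΛ,
    QuotientAddGroup.ker_mk'_map_comp]
  congr 1
  exact congrArg Submodule.toAddSubgroup <|
    (range_id_sub_eq_orthogonal hf hK).trans K.ker_orthogonalProjectionOnto.symm

theorem exists_quotient_torsion_equiv_map_orthogonalProjectionOnto [K.HasOrthogonalProjection]
    {m : ℕ} (hm : m ≠ 0) (hfm : f ^ m = 1) {Λ : AddSubgroup V} (hfΛ : ∀ x ∈ Λ, f x ∈ Λ)
    {N : AddSubgroup Λ} (hN : (N : Set Λ) = {z : Λ | ∃ x : Λ, (z : V) = x - f x}) :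
    ∃ e : ((Λ ⧸ N) ⧸ AddCommGroup.torsion (Λ ⧸ N)) ≃+
        Λ.map (K.orthogonalProjectionOnto : V →ₗ[ℝ] K).toAddMonoidHom,
      ∀ x : Λ, (e (QuotientAddGroup.mk (QuotientAddGroup.mk x)) : K) =
        K.orthogonalProjectionOnto (x : V) := by
  set π := (K.orthogonalProjectionOnto : V →ₗ[ℝ] K).toAddMonoidHom
  have hNker : N ≤ (π.comp Λ.subtype).ker := by
    intro z hz
    obtain ⟨x, hx⟩ : ∃ x : Λ, (z : V) = x - f x := by
      rwa [← SetLike.mem_coe, hN] at hz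
    simpa [π, hx, sub_eq_zero] using (orthogonalProjectionOnto_apply_of_fixed hf hK x).symm
  have hker (a : Λ) (ha : π a = 0) : ∃ n ≠ 0, n • a ∈ N := by
    obtain ⟨y, hy, hay⟩ :=
      exists_mem_nsmul_eq_sub_apply_of_orthogonalProjectionOnto_eq_zero hf hK hfm hfΛ a.2 ha
    refine ⟨m, hm, ?_⟩
    rw [← SetLike.mem_coe, hN]
    exact ⟨⟨y, hy⟩, by simpa using hay⟩
  have : IsAddTorsionFree K := .of_isTorsionFree ℝ K
  obtain ⟨e, he⟩ :=
    QuotientAddGroup.exists_quotient_torsion_equiv_range N (π.comp Λ.subtype) hNker hker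
  exact ⟨e.trans (AddEquiv.addSubgroupCongr (by
    rw [AddMonoidHom.range_comp, AddSubgroup.range_subtype])), he⟩

end FixedSubspace

theorem coinvariant_torus_general {V : Type*} [NormedAddCommGroup V] [InnerProductSpace ℝ V]
    [FiniteDimensional ℝ V]
    (Λ : AddSubgroup V)
    (σ : V ≃ₗ[ℝ] V) (hord : ∃ m : ℕ, 0 < m ∧ σ ^ m = 1)
    (hinner : ∀ x y : V, ⟪σ x, σ y⟫ = ⟪x, y⟫)
    (hσΛ : ∀ x ∈ Λ, σ x ∈ Λ)
    (σT : (V ⧸ Λ) →+ (V ⧸ Λ))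
    (hσT : ∀ x : V, σT (QuotientAddGroup.mk x) = QuotientAddGroup.mk (σ x))
    (NΛ : AddSubgroup ↥Λ)
    (hNΛ : (NΛ : Set ↥Λ) = {z : ↥Λ | ∃ x : ↥Λ, (z : V) = (x : V) - σ (x : V)})
    (K : Submodule ℝ V) (hK : ∀ x : V, x ∈ K ↔ σ x = x)
    (πΛ : AddSubgroup ↥K)
    (hπΛ : πΛ = AddSubgroup.map
      ((Submodule.orthogonalProjection K).toLinearMap.toAddMonoidHom) Λ) :
    ConnectedSpace
      ((V ⧸ Λ) ⧸ AddMonoidHom.range (AddMonoidHom.id (V ⧸ Λ) - σT)) ∧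
    Nonempty
      (((V ⧸ Λ) ⧸ AddMonoidHom.range (AddMonoidHom.id (V ⧸ Λ) - σT)) ≃+ (↥K ⧸ πΛ)) ∧
    ∃ e : ((↥Λ ⧸ NΛ) ⧸ AddCommGroup.torsion (↥Λ ⧸ NΛ)) ≃+ ↥πΛ,
      ∀ x : ↥Λ,
        ((e (QuotientAddGroup.mk (QuotientAddGroup.mk x)) : ↥K)) =
          Submodule.orthogonalProjection K (x : V) := by
  obtain ⟨m, hm, hσm⟩ := hord
  replace hσm : (σ : V →ₗ[ℝ] V) ^ m = 1 := by
    ext x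
    simpa [Module.End.coe_pow, LinearEquiv.coe_pow] using DFunLike.congr_fun hσm x
  subst hπΛ
  refine ⟨?_, nonempty_quotient_range_id_sub_equiv (f := (σ : V →ₗ[ℝ] V)) hinner hK Λ σT hσT,
    exists_quotient_torsion_equiv_map_orthogonalProjectionOnto hinner hK hm.ne' hσm hσΛ hNΛ⟩
  exact ((QuotientAddGroup.mk'_surjective _).comp
    (QuotientAddGroup.mk'_surjective Λ)).connectedSpace
      (continuous_quotient_mk'.comp continuous_quotient_mk')

/-- Let `T = 𝔱/Λ` be a torus (`Λ` a full lattice, generated by an `ℝ`-basis `bV` of `𝔱`)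
with a finite-order automorphism `σ` preserving `Λ` (and a `σ`-invariant inner
product), inducing `σT` on `T`. Then the coinvariant torus `T_σ = T/(Id − σT)(T)` is
connected and equals (is isomorphic to) `𝔱^σ/π(Λ)`, where `π : 𝔱 → 𝔱^σ` is the
orthogonal projection onto the fixed subspace `K = 𝔱^σ`. Moreover, orthogonal
projection induces an isomorphism `Λ_σ/Tor(Λ_σ) ≅ π(Λ)`. -/
theorem coinvariant_torus {V : Type*} [NormedAddCommGroup V] [InnerProductSpace ℝ V]
    [FiniteDimensional ℝ V] {ι : Type*} [Fintype ι] (bV : Module.Basis ι ℝ V)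
    (Λ : AddSubgroup V) (hΛ : Λ = AddSubgroup.closure (Set.range bV))
    (σ : V ≃ₗ[ℝ] V) (hord : ∃ m : ℕ, 0 < m ∧ σ ^ m = 1)
    (hinner : ∀ x y : V, ⟪σ x, σ y⟫ = ⟪x, y⟫)
    (hσΛ : ∀ x ∈ Λ, σ x ∈ Λ)
    (σT : (V ⧸ Λ) →+ (V ⧸ Λ))
    (hσT : ∀ x : V, σT (QuotientAddGroup.mk x) = QuotientAddGroup.mk (σ x))
    (NΛ : AddSubgroup ↥Λ)
    (hNΛ : (NΛ : Set ↥Λ) = {z : ↥Λ | ∃ x : ↥Λ, (z : V) = (x : V) - σ (x : V)})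
    (K : Submodule ℝ V) (hK : ∀ x : V, x ∈ K ↔ σ x = x)
    (πΛ : AddSubgroup ↥K)
    (hπΛ : πΛ = AddSubgroup.map
      ((Submodule.orthogonalProjection K).toLinearMap.toAddMonoidHom) Λ) :
    ConnectedSpace
      ((V ⧸ Λ) ⧸ AddMonoidHom.range (AddMonoidHom.id (V ⧸ Λ) - σT)) ∧
    Nonempty
      (((V ⧸ Λ) ⧸ AddMonoidHom.range (AddMonoidHom.id (V ⧸ Λ) - σT)) ≃+ (↥K ⧸ πΛ)) ∧
    ∃ e : ((↥Λ ⧸ NΛ) ⧸ AddCommGroup.torsion (↥Λ ⧸ NΛ)) ≃+ ↥πΛ,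
      ∀ x : ↥Λ,
        ((e (QuotientAddGroup.mk (QuotientAddGroup.mk x)) : ↥K)) =
          Submodule.orthogonalProjection K (x : V) :=
  coinvariant_torus_general Λ σ hord hinner hσΛ σT hσT NΛ hNΛ K hK πΛ hπΛ
end

section
/- Let Φ be a root system on 𝔱 and σ a linear isometry of finite order of 𝔱 preserving Φ and a set of simple roots Δ (hence permuting Δ). For a ∈ Φ, let ā = a|𝔱^σ. Then for every a ∈ Φ, ā ≠ 0; moreover, two roots a, a′ ∈ Φ satisfy a|𝔱^σ = a′|𝔱^σ if and only if a and a′ lie in the same ⟨σ⟩-orbit. -/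
open scoped RealInnerProductSpace

variable {V : Type*}

/-! The orbit sum `s(v) = ∑_{k<m} σᵏ v` over the cyclic group `⟨σ⟩` of order dividing `m`
is `σ`-fixed and satisfies `⟪s(v), x⟫ = m ⟪v, x⟫` for fixed `x`, so the restriction of `v` to
`𝔱^σ` is determined by `s(v)`. A functional equal to `1` on the simple roots is constant on
the `⟨σ⟩`-orbit of a positive root, with positive value; hence `s(b) ≠ 0` for every root `b`.
If `s(b) = s(b')`, then `0 < ⟪s(b), s(b)⟫ = m ⟪b', s(b)⟫`, so `⟪σᵏ b, b'⟫ > 0` for some `k`;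
unless `σᵏ b = b'`, the difference `σᵏ b - b'` is then a root with vanishing orbit sum. -/

theorem LinearIndependent.exists_linearMap_apply_eq {ι K M N : Type*} [Field K]
    [AddCommGroup M] [Module K M] [AddCommGroup N] [Module K N] {a : ι → M}
    (h : LinearIndependent K a) (f : ι → N) : ∃ g : M →ₗ[K] N, ∀ i, g (a i) = f i := by
  obtain ⟨g, hg⟩ := LinearMap.exists_extend ((Module.Basis.span h).constr K f)
  refine ⟨g, fun i => ?_⟩
  have hi := LinearMap.congr_fun hg (Module.Basis.span h i)
  rw [LinearMap.comp_apply, Module.Basis.constr_basis] at hi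
  simpa using hi

section OrbitSum

variable {R M : Type*} [Semiring R] [AddCommGroup M] [Module R M] (σ : M ≃ₗ[R] M) (m : ℕ)

def orbitSum : M →ₗ[R] M :=
  ∑ k ∈ Finset.range m, ((σ ^ k : M ≃ₗ[R] M) : M →ₗ[R] M)

variable {σ m}

theorem orbitSum_apply (v : M) : orbitSum σ m v = ∑ k ∈ Finset.range m, (σ ^ k) v := by
  simp [orbitSum]

theorem apply_orbitSum (v : M) : σ (orbitSum σ m v) = orbitSum σ m (σ v) := by
  simp only [orbitSum_apply, map_sum, ← LinearEquiv.mul_apply, ← pow_succ, ← pow_succ']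

theorem apply_orbitSum_of_pow_eq_one (hσ : σ ^ m = 1) (v : M) :
    σ (orbitSum σ m v) = orbitSum σ m v := by
  have hshift := (Finset.sum_range_succ' (fun k => (σ ^ k) v) m).symm.trans
    (Finset.sum_range_succ (fun k => (σ ^ k) v) m)
  rw [hσ, pow_zero] at hshift
  simpa only [orbitSum_apply, map_sum, ← LinearEquiv.mul_apply, ← pow_succ']
    using add_right_cancel hshift

theorem orbitSum_pow_apply (hσ : σ ^ m = 1) (k : ℕ) (v : M) :
    orbitSum σ m ((σ ^ k) v) = orbitSum σ m v := by
  induction k generalizing v with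
  | zero => rfl
  | succ k ih => rw [pow_succ, LinearEquiv.mul_apply, ih, ← apply_orbitSum,
      apply_orbitSum_of_pow_eq_one hσ]

end OrbitSum

section Isometry

variable [NormedAddCommGroup V] [InnerProductSpace ℝ V] {σ : V ≃ₗ[ℝ] V} {m : ℕ}

theorem inner_pow_apply_pow_apply (hiso : ∀ x y : V, ⟪σ x, σ y⟫ = ⟪x, y⟫) (k : ℕ) (x y : V) :
    ⟪(σ ^ k) x, (σ ^ k) y⟫ = ⟪x, y⟫ := by
  induction k with
  | zero => rfl
  | succ k ih => rw [pow_succ', LinearEquiv.mul_apply, LinearEquiv.mul_apply, hiso, ih]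

theorem inner_orbitSum_of_apply_eq (hiso : ∀ x y : V, ⟪σ x, σ y⟫ = ⟪x, y⟫) {x : V}
    (hx : σ x = x) (v : V) : ⟪orbitSum σ m v, x⟫ = m * ⟪v, x⟫ := by
  have hfix (k : ℕ) : (σ ^ k) x = x := by
    rw [LinearEquiv.coe_pow]
    exact Function.IsFixedPt.iterate hx k
  have hterm (k : ℕ) : ⟪(σ ^ k) v, x⟫ = ⟪v, x⟫ := by
    rw [← inner_pow_apply_pow_apply hiso k v x, hfix]
  simp [orbitSum_apply, sum_inner, hterm]

theorem forall_inner_eq_of_apply_eq_iff_orbitSum_eq (hiso : ∀ x y : V, ⟪σ x, σ y⟫ = ⟪x, y⟫)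
    (hm : 0 < m) (hσ : σ ^ m = 1) (v v' : V) :
    (∀ x : V, σ x = x → ⟪v, x⟫ = ⟪v', x⟫) ↔ orbitSum σ m v = orbitSum σ m v' := by
  constructor
  · intro h
    set w := orbitSum σ m (v - v')
    have hw : σ w = w := apply_orbitSum_of_pow_eq_one hσ _
    have hww : ⟪w, w⟫ = 0 := by
      rw [inner_orbitSum_of_apply_eq hiso hw, inner_sub_left, h w hw, sub_self, mul_zero]
    rw [← sub_eq_zero, ← map_sub]
    exact inner_self_eq_zero.1 hww
  · intro h x hx
    have hmR : (m : ℝ) ≠ 0 := by positivity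
    apply mul_left_cancel₀ hmR
    rw [← inner_orbitSum_of_apply_eq hiso hx, ← inner_orbitSum_of_apply_eq hiso hx, h]

end Isometry

section SimpleRoots

variable {M ι : Type*} [AddCommGroup M] [Module ℝ M] [Fintype ι] {σ : M ≃ₗ[ℝ] M} {m : ℕ}
  {a : ι → M}

theorem orbitSum_sum_natCast_smul_ne_zero (hind : LinearIndependent ℝ a)
    (hσa : Set.MapsTo σ (Set.range a) (Set.range a)) (hm : 0 < m) {c : ι → ℕ}
    (hc : ∑ i, (c i : ℝ) • a i ≠ 0) : orbitSum σ m (∑ i, (c i : ℝ) • a i) ≠ 0 := by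
  obtain ⟨g, hg⟩ := hind.exists_linearMap_apply_eq fun _ => (1 : ℝ)
  have hgσ (k : ℕ) (i : ι) : g ((σ ^ k) (a i)) = 1 := by
    obtain ⟨j, hj⟩ := hσa.iterate k (Set.mem_range_self i)
    rw [LinearEquiv.coe_pow, ← hj, hg]
  have hcpos : 0 < ∑ i, (c i : ℝ) := by
    obtain ⟨i, -, hi⟩ := Finset.exists_ne_zero_of_sum_ne_zero hc
    exact Finset.sum_pos' (fun i _ => Nat.cast_nonneg (c i))
      ⟨i, Finset.mem_univ i, Nat.cast_pos.2 (Nat.pos_of_ne_zero (by rintro h; simp [h] at hi))⟩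
  have hgsum : g (orbitSum σ m (∑ i, (c i : ℝ) • a i)) = m * ∑ i, (c i : ℝ) := by
    simp [orbitSum_apply, map_sum, hgσ, Finset.mul_sum, mul_comm]
  intro h
  rw [h, map_zero] at hgsum
  have : (0 : ℝ) < m * ∑ i, (c i : ℝ) := by positivity
  exact this.ne hgsum

theorem orbitSum_ne_zero_of_sum_natCast_smul (hind : LinearIndependent ℝ a)
    (hσa : Set.MapsTo σ (Set.range a) (Set.range a)) (hm : 0 < m) {b : M} (hb : b ≠ 0)
    (hbase : (∃ c : ι → ℕ, b = ∑ i, (c i : ℝ) • a i) ∨ (∃ c : ι → ℕ, b = -∑ i, (c i : ℝ) • a i)) :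
    orbitSum σ m b ≠ 0 := by
  rcases hbase with ⟨c, rfl⟩ | ⟨c, rfl⟩
  · exact orbitSum_sum_natCast_smul_ne_zero hind hσa hm hb
  · rw [map_neg, neg_ne_zero]
    exact orbitSum_sum_natCast_smul_ne_zero hind hσa hm (neg_ne_zero.1 hb)

end SimpleRoots

theorem inner_coroot [NormedAddCommGroup V] [InnerProductSpace ℝ V] (a b : V) :
    ⟪b, coroot a⟫ = 2 * ⟪b, a⟫ / ⟪a, a⟫ := by
  rw [coroot, real_inner_smul_right]
  ring

namespace IsRootSystem

variable [NormedAddCommGroup V] [InnerProductSpace ℝ V] {Φ : Set V} {a b : V}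

theorem ne_zero_of_mem (hΦ : IsRootSystem Φ) (hb : b ∈ Φ) : b ≠ 0 :=
  fun h => hΦ.2.1 (h ▸ hb)

theorem neg_mem (hΦ : IsRootSystem Φ) (hb : b ∈ Φ) : -b ∈ Φ := by
  have hbb : ⟪b, b⟫ ≠ 0 := (real_inner_self_pos.2 (hΦ.ne_zero_of_mem hb)).ne'
  have hrefl := hΦ.2.2.2.2 b hb b hb
  rwa [inner_coroot, mul_div_assoc, div_self hbb, mul_one, two_smul, sub_add_cancel_left]
    at hrefl

/-- Since the Cartan integers `⟪a, b^∨⟫` and `⟪b, a^∨⟫` are positive with product at most `4`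
(Cauchy–Schwarz), one of them is `1`, unless both are `2`, which forces `a = b`. -/
theorem sub_mem_of_inner_pos (hΦ : IsRootSystem Φ) (ha : a ∈ Φ) (hb : b ∈ Φ) (hab : a ≠ b)
    (hpos : 0 < ⟪a, b⟫) : a - b ∈ Φ := by
  have hA : 0 < ⟪a, a⟫ := real_inner_self_pos.2 (hΦ.ne_zero_of_mem ha)
  have hB : 0 < ⟪b, b⟫ := real_inner_self_pos.2 (hΦ.ne_zero_of_mem hb)
  obtain ⟨n, hn⟩ := hΦ.2.2.2.1 b hb a ha
  obtain ⟨n', hn'⟩ := hΦ.2.2.2.1 a ha b hb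
  have hnR : (n : ℝ) = 2 * ⟪a, b⟫ / ⟪b, b⟫ := by rw [← hn, inner_coroot]
  have hn'R : (n' : ℝ) = 2 * ⟪a, b⟫ / ⟪a, a⟫ := by rw [← hn', inner_coroot, real_inner_comm]
  have hn1 : 1 ≤ n := by
    have : (0 : ℝ) < n := by rw [hnR]; positivity
    exact_mod_cast this
  have hn'1 : 1 ≤ n' := by
    have : (0 : ℝ) < n' := by rw [hn'R]; positivity
    exact_mod_cast this
  have hprod : n * n' ≤ 4 := by
    have : (n : ℝ) * n' ≤ 4 := by
      rw [hnR, hn'R, div_mul_div_comm, div_le_iff₀ (by positivity)]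
      nlinarith [real_inner_mul_inner_self_le a b]
    exact_mod_cast this
  have hcases : n = 1 ∨ n' = 1 ∨ (n = 2 ∧ n' = 2) := by
    have : n ≤ 4 := by nlinarith
    interval_cases n <;> omega
  rcases hcases with h1 | h1 | ⟨h2, h2'⟩
  · simpa [hn, h1] using hΦ.2.2.2.2 b hb a ha
  · simpa [hn', h1] using hΦ.neg_mem (hΦ.2.2.2.2 a ha b hb)
  · rw [h2, Int.cast_ofNat, eq_div_iff hB.ne'] at hnR
    rw [h2', Int.cast_ofNat, eq_div_iff hA.ne'] at hn'R
    have : ⟪a - b, a - b⟫ = 0 := by rw [real_inner_sub_sub_self]; linarith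
    exact absurd (sub_eq_zero.1 (inner_self_eq_zero.1 this)) hab

theorem exists_pow_apply_eq_of_orbitSum_eq {σ : V ≃ₗ[ℝ] V} {m : ℕ} (hΦ : IsRootSystem Φ)
    (hiso : ∀ x y : V, ⟪σ x, σ y⟫ = ⟪x, y⟫) (hσΦ : Set.MapsTo σ Φ Φ) (hσ : σ ^ m = 1)
    (hne : ∀ b ∈ Φ, orbitSum σ m b ≠ 0) {b b' : V} (hb : b ∈ Φ) (hb' : b' ∈ Φ)
    (h : orbitSum σ m b = orbitSum σ m b') : ∃ k : ℕ, (σ ^ k) b = b' := by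
  have hs : σ (orbitSum σ m b) = orbitSum σ m b := apply_orbitSum_of_pow_eq_one hσ b
  have hsum : 0 < ∑ k ∈ Finset.range m, ⟪(σ ^ k) b, b'⟫ := by
    have hss : ⟪orbitSum σ m b, orbitSum σ m b⟫ = m * ⟪b', orbitSum σ m b⟫ := by
      nth_rewrite 1 [h]
      exact inner_orbitSum_of_apply_eq hiso hs b'
    have := pos_of_mul_pos_right (hss ▸ real_inner_self_pos.2 (hne b hb)) m.cast_nonneg
    rw [orbitSum_apply, inner_sum] at this
    simpa only [real_inner_comm] using this
  obtain ⟨k, -, hk⟩ := Finset.exists_lt_of_sum_lt (by simpa using hsum :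
    ∑ _k ∈ Finset.range m, (0 : ℝ) < ∑ k ∈ Finset.range m, ⟪(σ ^ k) b, b'⟫)
  refine ⟨k, by_contra fun hk' => ?_⟩
  have hσkb : (σ ^ k) b ∈ Φ := by
    rw [LinearEquiv.coe_pow]
    exact hσΦ.iterate k hb
  apply hne _ (hΦ.sub_mem_of_inner_pos hσkb hb' hk' hk)
  rw [map_sub, orbitSum_pow_apply hσ, h, sub_self]

end IsRootSystem

theorem restriction_fixed_subspace_general {ι : Type*} [Fintype ι]
    [NormedAddCommGroup V] [InnerProductSpace ℝ V]
    (Φ : Set V) (hΦ : IsRootSystem Φ)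
    (a : ι → V)
    (hind : LinearIndependent ℝ a)
    (hbase : ∀ b ∈ Φ, (∃ c : ι → ℕ, b = ∑ i, (c i : ℝ) • a i) ∨
      (∃ c : ι → ℕ, b = -∑ i, (c i : ℝ) • a i))
    (σ : V ≃ₗ[ℝ] V) (hiso : ∀ x y : V, ⟪σ x, σ y⟫ = ⟪x, y⟫)
    (hord : ∃ m : ℕ, 0 < m ∧ σ ^ m = 1)
    (hΦσ : σ '' Φ = Φ) (hΔσ : σ '' Set.range a = Set.range a) :
    (∀ b ∈ Φ, ∃ x : V, σ x = x ∧ ⟪b, x⟫ ≠ 0) ∧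
      ∀ b ∈ Φ, ∀ b' ∈ Φ,
        ((∀ x : V, σ x = x → ⟪b, x⟫ = ⟪b', x⟫) ↔ ∃ m : ℕ, (σ ^ m) b = b') := by
  obtain ⟨m, hm, hσ⟩ := hord
  have hσΦ : Set.MapsTo σ Φ Φ := (Set.mapsTo_image σ Φ).mono_right hΦσ.subset
  have hσΔ : Set.MapsTo σ (Set.range a) (Set.range a) :=
    (Set.mapsTo_image σ _).mono_right hΔσ.subset
  have hres := forall_inner_eq_of_apply_eq_iff_orbitSum_eq hiso hm hσ
  have hne (b : V) (hb : b ∈ Φ) : orbitSum σ m b ≠ 0 :=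
    orbitSum_ne_zero_of_sum_natCast_smul hind hσΔ hm (hΦ.ne_zero_of_mem hb) (hbase b hb)
  refine ⟨fun b hb => ?_, fun b hb b' hb' => ⟨fun h => ?_, ?_⟩⟩
  · by_contra! h
    exact hne b hb (by simpa using (hres b 0).1 (by simpa using h))
  · exact hΦ.exists_pow_apply_eq_of_orbitSum_eq hiso hσΦ hσ hne hb hb' ((hres b b').1 h)
  · rintro ⟨k, rfl⟩
    exact (hres _ _).2 (orbitSum_pow_apply hσ k b).symm

/-- Let `Φ` be a root system on `𝔱` with simple roots `a i`, and `σ` a linear isometry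
of finite order preserving `Φ` and the set of simple roots. Then the restriction of any
root to the fixed subspace `𝔱^σ` is nonzero, and two roots have the same restriction
to `𝔱^σ` iff they lie in the same `⟨σ⟩`-orbit. -/
theorem restriction_fixed_subspace {ι : Type*} [Fintype ι]
    [NormedAddCommGroup V] [InnerProductSpace ℝ V]
    (Φ : Set V) (hΦ : IsRootSystem Φ)
    (a : ι → V) (haΦ : ∀ i, a i ∈ Φ) (hinj : Function.Injective a)
    (hind : LinearIndependent ℝ a)
    (hbase : ∀ b ∈ Φ, (∃ c : ι → ℕ, b = ∑ i, (c i : ℝ) • a i) ∨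
      (∃ c : ι → ℕ, b = -∑ i, (c i : ℝ) • a i))
    (σ : V ≃ₗ[ℝ] V) (hiso : ∀ x y : V, ⟪σ x, σ y⟫ = ⟪x, y⟫)
    (hord : ∃ m : ℕ, 0 < m ∧ σ ^ m = 1)
    (hΦσ : σ '' Φ = Φ) (hΔσ : σ '' Set.range a = Set.range a) :
    (∀ b ∈ Φ, ∃ x : V, σ x = x ∧ ⟪b, x⟫ ≠ 0) ∧
      ∀ b ∈ Φ, ∀ b' ∈ Φ,
        ((∀ x : V, σ x = x → ⟪b, x⟫ = ⟪b', x⟫) ↔ ∃ m : ℕ, (σ ^ m) b = b') :=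
  restriction_fixed_subspace_general Φ hΦ a hind hbase σ hiso hord hΦσ hΔσ
end
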